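/- arXiv:2402.18214 — 5 statements merged into one kernel-verified Lean document; each statement's English description precedes it below -/
import Mathlib

section
/- Let G and H be finite simple connected non-complete graphs. Then the weakly toll number of the strong product satisfies wtn(G ⊠ H) ≤ 3. -/
open SimpleGraph

/-- A walk `w : u → v` is a *weakly toll walk* if every vertex of the walk adjacent to `u`
equals the second vertex of the walk, and every vertex of the walk adjacent to `v` equals the
second-to-last vertex of the walk. -/
def IsWeaklyTollWalk {V : Type*} (G : SimpleGraph V) {u v : V} (w : G.Walk u v) : Prop :=
  (∀ i ≤ w.length, G.Adj u (w.getVert i) → w.getVert i = w.getVert 1) ∧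
  (∀ i ≤ w.length, G.Adj (w.getVert i) v → w.getVert i = w.getVert (w.length - 1))

/-- The weakly toll interval `WT_G(u,v)`: all vertices lying on some weakly toll walk
between `u` and `v`. -/
def wtInterval {V : Type*} (G : SimpleGraph V) (u v : V) : Set V :=
  {x | ∃ w : G.Walk u v, IsWeaklyTollWalk G w ∧ x ∈ w.support}

/-- `WT(S)`: the union of the weakly toll intervals between pairs of vertices of `S`. -/
def wtClosure {V : Type*} (G : SimpleGraph V) (S : Set V) : Set V :=
  ⋃ u ∈ S, ⋃ v ∈ S, wtInterval G u v

/-- `S` is a weakly toll set if the weakly toll intervals between its members cover `V(G)`. -/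
def IsWeaklyTollSet {V : Type*} (G : SimpleGraph V) (S : Set V) : Prop :=
  wtClosure G S = Set.univ

/-- The weakly toll number: the minimum cardinality of a weakly toll set. -/
noncomputable def wtn {V : Type*} (G : SimpleGraph V) : ℕ :=
  sInf {n | ∃ S : Set V, IsWeaklyTollSet G S ∧ S.ncard = n}

/-- The weakly toll convex hull of `S`: the union of the iterates `WT^k(S)`. -/
def wtHull {V : Type*} (G : SimpleGraph V) (S : Set V) : Set V :=
  ⋃ k : ℕ, (wtClosure G)^[k] S

/-- `S` is a weakly toll hull set if its weakly toll convex hull is all of `V(G)`. -/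
def IsWeaklyTollHullSet {V : Type*} (G : SimpleGraph V) (S : Set V) : Prop :=
  wtHull G S = Set.univ

/-- The weakly toll hull number: the minimum cardinality of a weakly toll hull set. -/
noncomputable def wth {V : Type*} (G : SimpleGraph V) : ℕ :=
  sInf {n | ∃ S : Set V, IsWeaklyTollHullSet G S ∧ S.ncard = n}

/-- A walk `w : u → v` is a *semi weakly toll walk* if every vertex of the walk adjacent to `u`
equals the second vertex of the walk (no condition at `v`). -/
def IsSemiWeaklyTollWalk {V : Type*} (G : SimpleGraph V) {u v : V} (w : G.Walk u v) : Prop :=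
  ∀ i ≤ w.length, G.Adj u (w.getVert i) → w.getVert i = w.getVert 1

/-- The semi weakly toll interval `SWT_G(u,v)`. -/
def swtInterval {V : Type*} (G : SimpleGraph V) (u v : V) : Set V :=
  {x | ∃ w : G.Walk u v, IsSemiWeaklyTollWalk G w ∧ x ∈ w.support}

/-- The strong product of two simple graphs. -/
def strongProd {V W : Type*} (G : SimpleGraph V) (H : SimpleGraph W) :
    SimpleGraph (V × W) where
  Adj p q := (G.Adj p.1 q.1 ∧ p.2 = q.2) ∨ (p.1 = q.1 ∧ H.Adj p.2 q.2) ∨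
    (G.Adj p.1 q.1 ∧ H.Adj p.2 q.2)
  symm := by
    constructor
    rintro p q (⟨h1, h2⟩ | ⟨h1, h2⟩ | ⟨h1, h2⟩)
    · exact Or.inl ⟨h1.symm, h2.symm⟩
    · exact Or.inr (Or.inl ⟨h1.symm, h2.symm⟩)
    · exact Or.inr (Or.inr ⟨h1.symm, h2.symm⟩)
  loopless := by
    constructor
    rintro p (⟨h, -⟩ | ⟨-, h⟩ | ⟨h, -⟩)
    · exact G.loopless.irrefl _ h
    · exact H.loopless.irrefl _ h
    · exact G.loopless.irrefl _ h

/-- The lexicographic product of two simple graphs. -/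
def lexProd {V W : Type*} (G : SimpleGraph V) (H : SimpleGraph W) :
    SimpleGraph (V × W) where
  Adj p q := G.Adj p.1 q.1 ∨ (p.1 = q.1 ∧ H.Adj p.2 q.2)
  symm := by
    constructor
    rintro p q (h | ⟨h1, h2⟩)
    · exact Or.inl h.symm
    · exact Or.inr ⟨h1.symm, h2.symm⟩
  loopless := by
    constructor
    rintro p (h | ⟨-, h⟩)
    · exact G.loopless.irrefl _ h
    · exact H.loopless.irrefl _ h

/-- The adjacency relation of the corona product `G ∘ H`. -/
def coronaAdj {V W : Type*} (G : SimpleGraph V) (H : SimpleGraph W) :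
    V ⊕ V × W → V ⊕ V × W → Prop
  | Sum.inl g, Sum.inl g' => G.Adj g g'
  | Sum.inl g, Sum.inr p => g = p.1
  | Sum.inr p, Sum.inl g => p.1 = g
  | Sum.inr p, Sum.inr q => p.1 = q.1 ∧ H.Adj p.2 q.2

/-- The corona product `G ∘ H`: one copy of `G` and a copy of `H` for each vertex `g` of `G`,
with `g` joined to every vertex of its copy of `H`. -/
def corona {V W : Type*} (G : SimpleGraph V) (H : SimpleGraph W) :
    SimpleGraph (V ⊕ V × W) where
  Adj := coronaAdj G H
  symm := by
    constructor
    rintro (g | p) (g' | q) h <;> simp only [coronaAdj] at h ⊢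
    · exact h.symm
    · exact h.symm
    · exact h.symm
    · exact ⟨h.1.symm, h.2.symm⟩
  loopless := by
    constructor
    rintro (g | p) h <;> simp only [coronaAdj] at h
    · exact G.loopless.irrefl _ h
    · exact H.loopless.irrefl _ h.2

section WTHelpers

open SimpleGraph

private lemma getVert_mem_support' {V' : Type*} {P : SimpleGraph V'} {u v : V'}
    (w : P.Walk u v) (i : ℕ) (hi : i ≤ w.length) : w.getVert i ∈ w.support :=
  Walk.mem_support_iff_exists_getVert.2 ⟨i, rfl, hi⟩

/-- Main hub lemma: a walk `u, p, (middle from p to p avoiding N(u) ∪ N(v)), p, v`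
is weakly toll, so all its vertices lie in the weakly toll interval. -/
private lemma hub_walk_subset {V' : Type*} {P : SimpleGraph V'} {u v p : V'}
    (hup : P.Adj u p) (hpv : P.Adj p v) (huv : ¬P.Adj u v)
    (m : P.Walk p p)
    (hm : ∀ y ∈ m.support, y = p ∨ (¬P.Adj u y ∧ ¬P.Adj y v)) :
    ∀ x, (x ∈ m.support ∨ x = u ∨ x = v) → x ∈ wtInterval P u v := by
  intro x hx
  set Wk : P.Walk u v := Walk.cons hup (m.concat hpv) with hWk
  have hlen : Wk.length = m.length + 2 := by simp [hWk]
  have h1 : Wk.getVert 1 = p := by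
    simp [hWk, Walk.getVert_cons_succ]
  have h2 : Wk.getVert (Wk.length - 1) = p := by
    rw [hlen]
    show Wk.getVert (m.length + 1) = p
    rw [hWk, Walk.getVert_cons_succ, Walk.concat_eq_append, Walk.getVert_append]
    simp
  have hsup : ∀ y ∈ Wk.support, y = u ∨ y = v ∨ y ∈ m.support := by
    intro y hy
    rw [hWk, Walk.support_cons] at hy
    rcases List.mem_cons.1 hy with rfl | hy
    · exact Or.inl rfl
    · rw [Walk.support_concat, List.mem_append] at hy
      rcases hy with hy | hy
      · exact Or.inr (Or.inr hy)
      · exact Or.inr (Or.inl (List.mem_singleton.1 hy))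
  refine ⟨Wk, ⟨?_, ?_⟩, ?_⟩
  · intro i hi hadj
    rcases hsup _ (getVert_mem_support' Wk i hi) with he | he | he
    · rw [he] at hadj; exact absurd hadj (P.loopless.irrefl u)
    · rw [he] at hadj; exact absurd hadj huv
    · rcases hm _ he with he' | ⟨hf, _⟩
      · rw [h1, he']
      · exact absurd hadj hf
  · intro i hi hadj
    rcases hsup _ (getVert_mem_support' Wk i hi) with he | he | he
    · rw [he] at hadj; exact absurd hadj huv
    · rw [he] at hadj; exact absurd hadj (P.loopless.irrefl v)
    · rcases hm _ he with he' | ⟨_, hf⟩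
      · rw [h2, he']
      · exact absurd hadj hf
  · rcases hx with hx | rfl | rfl
    · rw [hWk, Walk.support_cons]
      refine List.mem_cons_of_mem _ ?_
      rw [Walk.support_concat, List.mem_append]
      exact Or.inl hx
    · exact Walk.start_mem_support _
    · exact Walk.end_mem_support _

/-- Excursion lemma: hub `p` adjacent to both ends, excursion `t` into free territory. -/
private lemma excursion_mem {V' : Type*} {P : SimpleGraph V'} {u v p s x : V'}
    (hup : P.Adj u p) (hpv : P.Adj p v) (huv : ¬P.Adj u v)
    (hps : P.Adj p s)
    (t : P.Walk s x)
    (ht : ∀ y ∈ t.support, ¬P.Adj u y ∧ ¬P.Adj y v) :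
    x ∈ wtInterval P u v := by
  set m : P.Walk p p := Walk.cons hps ((t.append t.reverse).concat hps.symm) with hm
  refine hub_walk_subset hup hpv huv m ?_ x (Or.inl ?_)
  · intro y hy
    rw [hm, Walk.support_cons] at hy
    rcases List.mem_cons.1 hy with rfl | hy
    · exact Or.inl rfl
    · rw [Walk.support_concat, List.mem_append] at hy
      rcases hy with hy | hy
      · rw [Walk.mem_support_append_iff] at hy
        rcases hy with hy | hy
        · exact Or.inr (ht y hy)
        · rw [Walk.support_reverse, List.mem_reverse] at hy
          exact Or.inr (ht y hy)
      · exact Or.inl (List.mem_singleton.1 hy)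
  · rw [hm, Walk.support_cons]
    refine List.mem_cons_of_mem _ ?_
    rw [Walk.support_concat, List.mem_append]
    refine Or.inl ?_
    rw [Walk.mem_support_append_iff]
    exact Or.inl (Walk.end_mem_support t)

/-- Lift a walk of `G` to a row of the strong product. -/
private def liftG {V W : Type*} (G : SimpleGraph V) (H : SimpleGraph W) (h : W) :
    {c a : V} → G.Walk c a → (strongProd G H).Walk (c, h) (a, h)
  | _, _, Walk.nil => Walk.nil
  | _, _, @Walk.cons _ _ c c' a e q =>
    Walk.cons (show (strongProd G H).Adj (c, h) (c', h) from Or.inl ⟨e, rfl⟩) (liftG G H h q)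

private lemma liftG_support {V W : Type*} (G : SimpleGraph V) (H : SimpleGraph W) (h : W) :
    ∀ {c a : V} (q : G.Walk c a) (y : V × W),
      y ∈ (liftG G H h q).support → y.1 ∈ q.support ∧ y.2 = h := by
  intro c a q
  induction q with
  | nil =>
    intro y hy
    simp only [liftG, Walk.support_nil, List.mem_singleton] at hy
    subst hy; simp
  | cons e q ih =>
    intro y hy
    simp only [liftG, Walk.support_cons, List.mem_cons] at hy
    rcases hy with rfl | hy
    · simp
    · obtain ⟨h1, h2⟩ := ih y hy
      exact ⟨List.mem_cons_of_mem _ h1, h2⟩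

/-- Lift a walk of `H` to a column of the strong product. -/
private def liftH {V W : Type*} (G : SimpleGraph V) (H : SimpleGraph W) (g : V) :
    {c a : W} → H.Walk c a → (strongProd G H).Walk (g, c) (g, a)
  | _, _, Walk.nil => Walk.nil
  | _, _, @Walk.cons _ _ c c' a e q =>
    Walk.cons (show (strongProd G H).Adj (g, c) (g, c') from Or.inr (Or.inl ⟨rfl, e⟩)) (liftH G H g q)

private lemma liftH_support {V W : Type*} (G : SimpleGraph V) (H : SimpleGraph W) (g : V) :
    ∀ {c a : W} (q : H.Walk c a) (y : V × W),
      y ∈ (liftH G H g q).support → y.1 = g ∧ y.2 ∈ q.support := by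
  intro c a q
  induction q with
  | nil =>
    intro y hy
    simp only [liftH, Walk.support_nil, List.mem_singleton] at hy
    subst hy; simp
  | cons e q ih =>
    intro y hy
    simp only [liftH, Walk.support_cons, List.mem_cons] at hy
    rcases hy with rfl | hy
    · simp
    · obtain ⟨h1, h2⟩ := ih y hy
      exact ⟨h1, List.mem_cons_of_mem _ h2⟩

/-- From any walk to `g1`, starting outside `N[g1]`, extract an escape route:
a walk staying outside `N[g1]` to a vertex `c` having a neighbour `d ∈ N(g1)`. -/
private lemma exists_escape {V' : Type*} (G' : SimpleGraph V') (g1 : V') :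
    ∀ (a : V') (p : G'.Walk a g1), a ≠ g1 → ¬G'.Adj g1 a →
    ∃ (c d : V') (q : G'.Walk a c),
      (∀ w ∈ q.support, w ≠ g1 ∧ ¬G'.Adj g1 w) ∧ G'.Adj c d ∧ G'.Adj d g1 := by
  intro a p
  induction p with
  | nil => intro h _; exact absurd rfl h
  | @cons x y gg e q ih =>
    intro hx hax
    by_cases hyg : y = gg
    · subst hyg; exact absurd e.symm hax
    by_cases hy : G'.Adj gg y
    · refine ⟨x, y, Walk.nil, ?_, e, hy.symm⟩
      intro w hw
      simp only [Walk.support_nil, List.mem_singleton] at hw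
      subst hw; exact ⟨hx, hax⟩
    · obtain ⟨c, d, q', hq', hcd, hdg⟩ := ih hyg hy
      refine ⟨c, d, Walk.cons e q', ?_, hcd, hdg⟩
      intro w hw
      simp only [Walk.support_cons, List.mem_cons] at hw
      rcases hw with rfl | hw
      · exact ⟨hx, hax⟩
      · exact hq' w hw

/-- Induced path of length 2 extracted from any walk between nonadjacent vertices. -/
private lemma exists_P3 {V' : Type*} (G' : SimpleGraph V') (y : V') :
    ∀ (x : V') (p : G'.Walk x y), x ≠ y → ¬G'.Adj x y →
    ∃ g1 g0 g2 : V', G'.Adj g1 g0 ∧ G'.Adj g0 g2 ∧ ¬G'.Adj g1 g2 ∧ g1 ≠ g2 := by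
  intro x p
  induction p with
  | nil => intro h _; exact absurd rfl h
  | @cons x b yy e q ih =>
    intro hxy hadj
    by_cases hby : b = yy
    · subst hby; exact absurd e hadj
    by_cases hb : G'.Adj b yy
    · exact ⟨x, b, yy, e, hb, hadj, hxy⟩
    · exact ih hby hb

private lemma exists_dist2 {V' : Type*} (G' : SimpleGraph V') (hc : G'.Connected)
    (hnc : G' ≠ ⊤) :
    ∃ g1 g0 g2 : V', G'.Adj g1 g0 ∧ G'.Adj g0 g2 ∧ ¬G'.Adj g1 g2 ∧ g1 ≠ g2 := by
  have hpair : ∃ x y : V', x ≠ y ∧ ¬G'.Adj x y := by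
    by_contra hcon
    push_neg at hcon
    apply hnc
    ext x y
    simp only [top_adj]
    exact ⟨fun h' => h'.ne, fun hne => hcon x y hne⟩
  obtain ⟨x, y, hxy, hna⟩ := hpair
  obtain ⟨p⟩ := hc.preconnected x y
  exact exists_P3 G' y x p hxy hna

private lemma strongProd_adj_iff {V W : Type*} {G : SimpleGraph V} {H : SimpleGraph W}
    {p q : V × W} :
    (strongProd G H).Adj p q ↔ (G.Adj p.1 q.1 ∧ p.2 = q.2) ∨ (p.1 = q.1 ∧ H.Adj p.2 q.2) ∨
      (G.Adj p.1 q.1 ∧ H.Adj p.2 q.2) := Iff.rfl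

private lemma adj_fst {V W : Type*} {G : SimpleGraph V} {H : SimpleGraph W}
    {p q : V × W} (h : (strongProd G H).Adj p q) : p.1 = q.1 ∨ G.Adj p.1 q.1 := by
  rcases h with ⟨h1, _⟩ | ⟨h1, _⟩ | ⟨h1, _⟩
  · exact Or.inr h1
  · exact Or.inl h1
  · exact Or.inr h1

private lemma adj_snd {V W : Type*} {G : SimpleGraph V} {H : SimpleGraph W}
    {p q : V × W} (h : (strongProd G H).Adj p q) : p.2 = q.2 ∨ H.Adj p.2 q.2 := by
  rcases h with ⟨_, h2⟩ | ⟨_, h2⟩ | ⟨_, h2⟩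
  · exact Or.inl h2
  · exact Or.inr h2
  · exact Or.inr h2

end WTHelpers

/-- For finite connected non-complete simple graphs `G`, `H`, the weakly toll
number of the strong product satisfies `wtn(G ⊠ H) ≤ 3`. -/
theorem wtn_strongProd_le_three {V W : Type*} [Fintype V] [Fintype W]
    (G : SimpleGraph V) (H : SimpleGraph W)
    (hGc : G.Connected) (hHc : H.Connected)
    (hGnc : G ≠ ⊤) (hHnc : H ≠ ⊤) :
    wtn (strongProd G H) ≤ 3 := by
  classical
  obtain ⟨g1, g0, g2, hg10, hg02, hg12, hg12'⟩ := exists_dist2 G hGc hGnc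
  obtain ⟨h1, h0, h2, hh10, hh02, hh12, hh12'⟩ := exists_dist2 H hHc hHnc
  set P := strongProd G H with hP
  set u : V × W := (g1, h1) with hu
  set v : V × W := (g2, h1) with hv
  set z : V × W := (g1, h2) with hz
  have huv : ¬P.Adj u v := by
    intro h
    rcases adj_fst h with h' | h'
    · exact hg12' h'
    · exact hg12 h'
  have huz : ¬P.Adj u z := by
    intro h
    rcases adj_snd h with h' | h'
    · exact hh12' h'
    · exact hh12 h'
  have hvz : ¬P.Adj v z := by
    intro h
    rcases adj_fst h with h' | h'
    · exact hg12' h'.symm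
    · exact hg12 h'.symm
  have freeG : ∀ y : V × W, y.1 ≠ g1 → ¬G.Adj g1 y.1 → ¬P.Adj u y ∧ ¬P.Adj y z := by
    intro y hy1 hy2
    constructor
    · intro h
      rcases adj_fst h with h' | h'
      · exact hy1 h'.symm
      · exact hy2 h'
    · intro h
      rcases adj_fst h with h' | h'
      · exact hy1 h'
      · exact hy2 h'.symm
  have freeH : ∀ y : V × W, y.2 ≠ h1 → ¬H.Adj h1 y.2 → ¬P.Adj u y ∧ ¬P.Adj y v := by
    intro y hy1 hy2
    constructor
    · intro h
      rcases adj_snd h with h' | h'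
      · exact hy1 h'.symm
      · exact hy2 h'
    · intro h
      rcases adj_snd h with h' | h'
      · exact hy1 h'
      · exact hy2 h'.symm
  have memu : u ∈ ({u, v, z} : Set (V × W)) := by simp
  have memv : v ∈ ({u, v, z} : Set (V × W)) := by simp
  have memz : z ∈ ({u, v, z} : Set (V × W)) := by simp
  have cover : ∀ x : V × W, x ∈ wtClosure P {u, v, z} := by
    intro x
    obtain ⟨a, b⟩ := x
    by_cases hA1 : a = g1 ∨ G.Adj g1 a
    case neg =>
      -- Case 1 : a ∉ N[g1]; use pair (u, z)
      push_neg at hA1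
      obtain ⟨ha1, ha2⟩ := hA1
      obtain ⟨pg⟩ := hGc.preconnected a g1
      obtain ⟨c, d, q, hq, hcd, hdg⟩ := exists_escape G g1 a pg ha1 ha2
      obtain ⟨wH⟩ := hHc.preconnected h0 b
      have hx : (a, b) ∈ wtInterval P u z := by
        refine excursion_mem (p := (d, h0)) (s := (c, h0))
          (Or.inr (Or.inr ⟨hdg.symm, hh10⟩)) (Or.inr (Or.inr ⟨hdg, hh02⟩)) huz
          (Or.inl ⟨hcd.symm, rfl⟩)
          ((liftG G H h0 q.reverse).append (liftH G H a wH)) ?_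
        intro y hy
        rw [SimpleGraph.Walk.mem_support_append_iff] at hy
        rcases hy with hy | hy
        · obtain ⟨hy1, _⟩ := liftG_support G H h0 q.reverse y hy
          rw [SimpleGraph.Walk.support_reverse, List.mem_reverse] at hy1
          obtain ⟨hne, hnadj⟩ := hq _ hy1
          exact freeG y hne hnadj
        · obtain ⟨hy1, _⟩ := liftH_support G H a wH y hy
          refine freeG y ?_ ?_
          · rw [hy1]; exact ha1
          · rw [hy1]; exact ha2
      exact Set.mem_biUnion memu (Set.mem_biUnion memz hx)
    case pos =>
      by_cases hB1 : b = h1 ∨ H.Adj h1 b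
      case neg =>
        -- Case 2 : b ∉ N[h1]; use pair (u, v)
        push_neg at hB1
        obtain ⟨hb1, hb2⟩ := hB1
        obtain ⟨pH⟩ := hHc.preconnected b h1
        obtain ⟨f, e, qH, hqH, hfe, heh⟩ := exists_escape H h1 b pH hb1 hb2
        obtain ⟨wG⟩ := hGc.preconnected g0 a
        have hfree_f := hqH f (SimpleGraph.Walk.end_mem_support qH)
        have hx : (a, b) ∈ wtInterval P u v := by
          refine excursion_mem (p := (g0, e)) (s := (g0, f))
            (Or.inr (Or.inr ⟨hg10, heh.symm⟩)) (Or.inr (Or.inr ⟨hg02, heh⟩)) huv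
            (Or.inr (Or.inl ⟨rfl, hfe.symm⟩))
            ((liftG G H f wG).append (liftH G H a qH.reverse)) ?_
          intro y hy
          rw [SimpleGraph.Walk.mem_support_append_iff] at hy
          rcases hy with hy | hy
          · obtain ⟨_, hy2⟩ := liftG_support G H f wG y hy
            refine freeH y ?_ ?_
            · rw [hy2]; exact hfree_f.1
            · rw [hy2]; exact hfree_f.2
          · obtain ⟨_, hy2⟩ := liftH_support G H a qH.reverse y hy
            rw [SimpleGraph.Walk.support_reverse, List.mem_reverse] at hy2
            obtain ⟨hne, hnadj⟩ := hqH _ hy2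
            exact freeH y hne hnadj
        exact Set.mem_biUnion memu (Set.mem_biUnion memv hx)
      case pos =>
        -- Case 3 : a ∈ N[g1], b ∈ N[h1]
        by_cases hxu : (a, b) = u
        · -- 3a : x = u
          have hx : (a, b) ∈ wtInterval P u v := by
            refine hub_walk_subset (p := (g0, h0))
              (Or.inr (Or.inr ⟨hg10, hh10⟩)) (Or.inr (Or.inr ⟨hg02, hh10.symm⟩)) huv
              SimpleGraph.Walk.nil ?_ (a, b) (Or.inr (Or.inl hxu))
            intro y hy
            simp only [SimpleGraph.Walk.support_nil, List.mem_singleton] at hy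
            exact Or.inl hy
          exact Set.mem_biUnion memu (Set.mem_biUnion memv hx)
        · have hadj_ux : P.Adj u (a, b) := by
            rcases hA1 with rfl | ha <;> rcases hB1 with rfl | hb
            · exact absurd hu.symm hxu
            · exact Or.inr (Or.inl ⟨rfl, hb⟩)
            · exact Or.inl ⟨ha, rfl⟩
            · exact Or.inr (Or.inr ⟨ha, hb⟩)
          by_cases hB2 : b = h2 ∨ H.Adj h2 b
          · -- 3b : use walk u, x, z
            have hb2 : H.Adj h2 b := by
              rcases hB2 with rfl | hb2
              · rcases hB1 with h' | h'
                · exact absurd h'.symm hh12'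
                · exact absurd h' hh12
              · exact hb2
            have hadj_xz : P.Adj (a, b) z := by
              rcases hA1 with rfl | ha
              · exact Or.inr (Or.inl ⟨rfl, hb2.symm⟩)
              · exact Or.inr (Or.inr ⟨ha.symm, hb2.symm⟩)
            have hx : (a, b) ∈ wtInterval P u z := by
              refine hub_walk_subset (p := (a, b)) hadj_ux hadj_xz huz
                SimpleGraph.Walk.nil ?_ (a, b) (Or.inl ?_)
              · intro y hy
                simp only [SimpleGraph.Walk.support_nil, List.mem_singleton] at hy
                exact Or.inl hy
              · simp [SimpleGraph.Walk.support_nil]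
            exact Set.mem_biUnion memu (Set.mem_biUnion memz hx)
          · by_cases hA2 : a = g2 ∨ G.Adj g2 a
            · -- 3c : use walk u, x, v
              have ha2 : G.Adj g2 a := by
                rcases hA2 with rfl | ha2
                · rcases hA1 with h' | h'
                  · exact absurd h'.symm hg12'
                  · exact absurd h' hg12
                · exact ha2
              have hadj_xv : P.Adj (a, b) v := by
                rcases hB1 with rfl | hb
                · exact Or.inl ⟨ha2.symm, rfl⟩
                · exact Or.inr (Or.inr ⟨ha2.symm, hb.symm⟩)
              have hx : (a, b) ∈ wtInterval P u v := by
                refine hub_walk_subset (p := (a, b)) hadj_ux hadj_xv huv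
                  SimpleGraph.Walk.nil ?_ (a, b) (Or.inl ?_)
                · intro y hy
                  simp only [SimpleGraph.Walk.support_nil, List.mem_singleton] at hy
                  exact Or.inl hy
                · simp [SimpleGraph.Walk.support_nil]
              exact Set.mem_biUnion memu (Set.mem_biUnion memv hx)
            · -- 3d : use walk v, r, u, x, u, r, z  with r = (g0, h0)
              have hvr : P.Adj v (g0, h0) := Or.inr (Or.inr ⟨hg02.symm, hh10⟩)
              have hrz : P.Adj ((g0, h0) : V × W) z := Or.inr (Or.inr ⟨hg10.symm, hh02⟩)
              have hru : P.Adj ((g0, h0) : V × W) u := Or.inr (Or.inr ⟨hg10.symm, hh10.symm⟩)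
              set m : P.Walk (g0, h0) (g0, h0) :=
                SimpleGraph.Walk.cons hru (SimpleGraph.Walk.cons hadj_ux
                  (SimpleGraph.Walk.cons hadj_ux.symm
                    (SimpleGraph.Walk.cons hru.symm SimpleGraph.Walk.nil))) with hm
              have hx : (a, b) ∈ wtInterval P v z := by
                refine hub_walk_subset hvr hrz hvz m ?_ (a, b) (Or.inl ?_)
                · intro y hy
                  rw [hm] at hy
                  simp only [SimpleGraph.Walk.support_cons, SimpleGraph.Walk.support_nil,
                    List.mem_cons, List.mem_singleton, List.not_mem_nil, or_false] at hy
                  rcases hy with rfl | rfl | rfl | rfl | rfl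
                  · exact Or.inl rfl
                  · refine Or.inr ⟨fun h => huv h.symm, huz⟩
                  · refine Or.inr ⟨?_, ?_⟩
                    · intro h
                      rcases adj_fst h with h' | h'
                      · exact hA2 (Or.inl h'.symm)
                      · exact hA2 (Or.inr h')
                    · intro h
                      rcases adj_snd h with h' | h'
                      · exact hB2 (Or.inl h')
                      · exact hB2 (Or.inr h'.symm)
                  · refine Or.inr ⟨fun h => huv h.symm, huz⟩
                  · exact Or.inl rfl
                · rw [hm]
                  simp [SimpleGraph.Walk.support_cons, SimpleGraph.Walk.support_nil]
              exact Set.mem_biUnion memv (Set.mem_biUnion memz hx)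
  have hS : IsWeaklyTollSet P {u, v, z} := Set.eq_univ_of_forall cover
  have hne_uv : u ≠ v := by
    rw [hu, hv]
    intro h
    exact hg12' (congrArg Prod.fst h)
  have hne_uz : u ≠ z := by
    rw [hu, hz]
    intro h
    exact hh12' (congrArg Prod.snd h)
  have hne_vz : v ≠ z := by
    rw [hv, hz]
    intro h
    exact hg12' (congrArg Prod.fst h).symm
  have hcard : ({u, v, z} : Set (V × W)).ncard = 3 := by
    rw [Set.ncard_eq_three]
    exact ⟨u, v, z, hne_uv, hne_uz, hne_vz, rfl⟩
  exact Nat.sInf_le ⟨{u, v, z}, hS, hcard⟩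
end

section
/- Let G be a finite simple connected non-complete graph and let u, v be two non-adjacent vertices of G such that |WT_G(u,v)| ≥ |WT_G(w,z)| for all vertices w, z of G. Let W = WT_G(u,v), X_u = N[u] \ W, X_v = N[v] \ W and X = V(G) \ W. Then X_u ∩ X_v = ∅ and X = X_u ∪ X_v. -/
open SimpleGraph

namespace WTAux

open SimpleGraph Walk

variable {V : Type*} {G : SimpleGraph V}

lemma getVert_append_left {a b c : V} (p : G.Walk a b) (q : G.Walk b c) {i : ℕ}
    (hi : i ≤ p.length) : (p.append q).getVert i = p.getVert i := by
  rw [Walk.getVert_append]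
  rcases lt_or_eq_of_le hi with h | h
  · simp [h]
  · subst h
    simp [Walk.getVert_length, Walk.getVert_zero]

lemma getVert_append_right {a b c : V} (p : G.Walk a b) (q : G.Walk b c) (i : ℕ) :
    (p.append q).getVert (p.length + i) = q.getVert i := by
  rw [Walk.getVert_append]
  split_ifs with h
  · omega
  · congr 1
    omega

lemma isWeaklyTollWalk_iff_support {u v : V} (w : G.Walk u v) :
    IsWeaklyTollWalk G w ↔
      (∀ x ∈ w.support, G.Adj u x → x = w.getVert 1) ∧
      (∀ x ∈ w.support, G.Adj x v → x = w.getVert (w.length - 1)) := by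
  constructor
  · rintro ⟨h1, h2⟩
    constructor
    · intro x hx hadj
      obtain ⟨n, hn, hnl⟩ := Walk.mem_support_iff_exists_getVert.mp hx
      subst hn
      exact h1 n hnl hadj
    · intro x hx hadj
      obtain ⟨n, hn, hnl⟩ := Walk.mem_support_iff_exists_getVert.mp hx
      subst hn
      exact h2 n hnl hadj
  · rintro ⟨h1, h2⟩
    refine ⟨fun i hi ha => h1 _ ?_ ha, fun i hi ha => h2 _ ?_ ha⟩ <;>
      exact Walk.mem_support_iff_exists_getVert.mpr ⟨i, rfl, hi⟩

lemma support_subset_wtInterval {u v : V} {w : G.Walk u v} (h : IsWeaklyTollWalk G w) :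
    ∀ x ∈ w.support, x ∈ wtInterval G u v := fun x hx => ⟨w, h, hx⟩

lemma dist_start_getVert_le (hGc : G.Connected) {a c : V} (w : G.Walk a c) (i : ℕ) :
    G.dist a (w.getVert i) ≤ i := by
  induction w generalizing i with
  | nil => simp [Walk.getVert, SimpleGraph.dist_self]
  | @cons a b c h p ih =>
    cases i with
    | zero => simp [Walk.getVert_zero]
    | succ n =>
      have h1 : G.dist a b = 1 := SimpleGraph.dist_eq_one_iff_adj.mpr h
      calc G.dist a ((Walk.cons h p).getVert (n + 1))
          = G.dist a (p.getVert n) := by rw [Walk.getVert_cons_succ]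
        _ ≤ G.dist a b + G.dist b (p.getVert n) := hGc.dist_triangle
        _ ≤ n + 1 := by have := ih n; omega

lemma shortest_getVert_dist (hGc : G.Connected) {a c : V} {w : G.Walk a c}
    (hw : w.length = G.dist a c) {i : ℕ} (hi : i ≤ w.length) :
    G.dist a (w.getVert i) = i ∧ G.dist (w.getVert i) c = w.length - i := by
  have h1 : G.dist a (w.getVert i) ≤ i := dist_start_getVert_le hGc w i
  have h2 : G.dist (w.getVert i) c ≤ w.length - i := by
    have h3 := dist_start_getVert_le hGc w.reverse (w.length - i)
    rw [Walk.getVert_reverse] at h3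
    have h4 : w.length - (w.length - i) = i := by omega
    rw [h4] at h3
    rw [G.dist_comm]
    simpa using h3
  have h3 := hGc.dist_triangle (u := a) (v := w.getVert i) (w := c)
  constructor <;> omega

lemma shortest_adj_start (hGc : G.Connected) {a c : V} {w : G.Walk a c}
    (hw : w.length = G.dist a c) {i : ℕ} (hi : i ≤ w.length)
    (ha : G.Adj a (w.getVert i)) : i = 1 := by
  have := (shortest_getVert_dist hGc hw hi).1
  have h2 : G.dist a (w.getVert i) = 1 := SimpleGraph.dist_eq_one_iff_adj.mpr ha
  omega

lemma shortest_adj_end (hGc : G.Connected) {a c : V} {w : G.Walk a c}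
    (hw : w.length = G.dist a c) {i : ℕ} (hi : i ≤ w.length)
    (ha : G.Adj (w.getVert i) c) : i = w.length - 1 := by
  have := (shortest_getVert_dist hGc hw hi).2
  have h2 : G.dist (w.getVert i) c = 1 := SimpleGraph.dist_eq_one_iff_adj.mpr ha
  omega

lemma shortest_isWeaklyTollWalk (hGc : G.Connected) {a c : V} {w : G.Walk a c}
    (hw : w.length = G.dist a c) : IsWeaklyTollWalk G w := by
  constructor
  · intro i hi ha
    rw [shortest_adj_start hGc hw hi ha]
  · intro i hi ha
    rw [shortest_adj_end hGc hw hi ha]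

lemma common_neighbor_mem {u v x : V} (hnadj : ¬ G.Adj u v) (h1 : G.Adj u x)
    (h2 : G.Adj x v) : x ∈ wtInterval G u v := by
  refine ⟨Walk.cons h1 (Walk.cons h2 Walk.nil), ⟨?_, ?_⟩, by simp⟩
  · intro i hi ha
    simp only [Walk.length_cons, Walk.length_nil] at hi
    interval_cases i <;> simp_all [Walk.getVert]
  · intro i hi ha
    simp only [Walk.length_cons, Walk.length_nil] at hi
    interval_cases i <;> simp_all [Walk.getVert]


lemma exists_prefix {a c : V} (w : G.Walk a c) :
    ∀ n, n ≤ w.length →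
      ∃ p : G.Walk a (w.getVert n), p.length = n ∧ ∀ i, p.getVert i = w.getVert (min i n) := by
  induction w with
  | nil =>
    intro n hn
    simp only [Walk.length_nil, Nat.le_zero] at hn
    subst hn
    exact ⟨Walk.nil, rfl, fun i => rfl⟩
  | @cons a b c h q ih =>
    intro n hn
    cases n with
    | zero =>
      refine ⟨Walk.nil.copy rfl (Walk.getVert_zero _).symm, by simp, fun i => ?_⟩
      simp [Walk.getVert]
    | succ m =>
      obtain ⟨p, hp, hpg⟩ := ih m (by simpa [Nat.succ_le_succ_iff] using hn)
      refine ⟨(Walk.cons h p).copy rfl (Walk.getVert_cons_succ q h).symm, by simp [hp], fun i => ?_⟩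
      cases i with
      | zero => simp
      | succ j =>
        simp only [Walk.getVert_copy, Walk.getVert_cons_succ, hpg j, Nat.succ_min_succ]
        exact (Walk.getVert_copy _ _ _ _).trans (by simp [hpg j])

lemma detour_mem_wtInterval {u v x z : V} (T : G.Walk u v) (hT : IsWeaklyTollWalk G T)
    (hz : z ∈ T.support) (hzu : z ≠ u) (hzv : z ≠ v) (D : G.Walk z x)
    (hD : ∀ d ∈ D.support, d = z ∨ (¬ G.Adj u d ∧ ¬ G.Adj d v)) :
    x ∈ wtInterval G u v := by
  letI := Classical.decEq V
  obtain ⟨hT1, hT2⟩ := (isWeaklyTollWalk_iff_support T).mp hT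
  set T1 := T.takeUntil z hz with hT1def
  set T2 := T.dropUntil z hz with hT2def
  have hspec : T1.append T2 = T := T.take_spec hz
  have hlen1 : 1 ≤ T1.length := by
    rcases Nat.eq_zero_or_pos T1.length with h | h
    · exact absurd (Walk.eq_of_length_eq_zero h).symm hzu
    · exact h
  have hlen2 : 1 ≤ T2.length := by
    rcases Nat.eq_zero_or_pos T2.length with h | h
    · exact absurd (Walk.eq_of_length_eq_zero h) hzv
    · exact h
  set N : G.Walk u v := T1.append ((D.append D.reverse).append T2) with hNdef
  have hmemN : ∀ d, d ∈ N.support ↔ (d ∈ T1.support ∨ d ∈ D.support ∨ d ∈ T2.support) := by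
    intro d
    simp only [hNdef, Walk.mem_support_append_iff, Walk.support_reverse, List.mem_reverse]
    tauto
  have hsub1 : ∀ d ∈ T1.support, d ∈ T.support := by
    intro d hd
    rw [← hspec, Walk.mem_support_append_iff]
    exact Or.inl hd
  have hsub2 : ∀ d ∈ T2.support, d ∈ T.support := by
    intro d hd
    rw [← hspec, Walk.mem_support_append_iff]
    exact Or.inr hd
  have hg1 : N.getVert 1 = T.getVert 1 := by
    rw [hNdef, getVert_append_left _ _ hlen1, ← hspec, getVert_append_left _ _ hlen1]
  have hg2 : N.getVert (N.length - 1) = T.getVert (T.length - 1) := by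
    have hNlen : N.length = T1.length + (D.length + D.length + T2.length) := by
      simp [hNdef, Walk.length_append, Walk.length_reverse]
      try omega
    have hTlen : T.length = T1.length + T2.length := by
      rw [← hspec, Walk.length_append]
    have e1 : N.length - 1 = T1.length + (D.length + D.length + (T2.length - 1)) := by omega
    have e2 : T.length - 1 = T1.length + (T2.length - 1) := by omega
    rw [e1, hNdef, getVert_append_right]
    have e3 : D.length + D.length + (T2.length - 1) = (D.append D.reverse).length + (T2.length - 1) := by
      simp [Walk.length_append, Walk.length_reverse]
    rw [e3, getVert_append_right, e2, ← hspec, getVert_append_right]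
  refine ⟨N, (isWeaklyTollWalk_iff_support N).mpr ⟨?_, ?_⟩, ?_⟩
  · intro d hd hadj
    rw [hg1]
    rw [hmemN] at hd
    rcases hd with hd | hd | hd
    · exact hT1 d (hsub1 d hd) hadj
    · rcases hD d hd with rfl | ⟨hnd, _⟩
      · exact hT1 d hz hadj
      · exact absurd hadj hnd
    · exact hT1 d (hsub2 d hd) hadj
  · intro d hd hadj
    rw [hg2]
    rw [hmemN] at hd
    rcases hd with hd | hd | hd
    · exact hT2 d (hsub1 d hd) hadj
    · rcases hD d hd with rfl | ⟨_, hnd⟩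
      · exact hT2 d hz hadj
      · exact absurd hadj hnd
    · exact hT2 d (hsub2 d hd) hadj
  · rw [hmemN]
    exact Or.inr (Or.inl D.end_mem_support)

lemma mem_nbhd_of_not_mem [Fintype V] (hGc : G.Connected) {u v x : V}
    (huv : u ≠ v) (hnadj : ¬ G.Adj u v)
    (hmax : ∀ w z : V, (wtInterval G w z).ncard ≤ (wtInterval G u v).ncard)
    (hx : x ∉ wtInterval G u v) :
    x = u ∨ G.Adj u x ∨ x = v ∨ G.Adj v x := by
  by_contra hc
  push_neg at hc
  obtain ⟨hxu, hUadj, hxv, hVadj⟩ := hc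
  have hxv' : ¬ G.Adj x v := fun h => hVadj h.symm
  obtain ⟨P0, hP0len⟩ := hGc.exists_walk_length_eq_dist u v
  have hP0 : IsWeaklyTollWalk G P0 := shortest_isWeaklyTollWalk hGc hP0len
  have hC1 : ∀ z, G.Adj z x → z ∉ wtInterval G u v := by
    intro z hzx hzW
    obtain ⟨T, hT, hzT⟩ := hzW
    apply hx
    refine detour_mem_wtInterval T hT hzT ?_ ?_ (Walk.cons hzx Walk.nil) ?_
    · rintro rfl; exact hUadj hzx
    · rintro rfl; exact hxv' hzx.symm
    · intro d hd
      simp only [Walk.support_cons, Walk.support_nil, List.mem_cons,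
        List.not_mem_nil, or_false] at hd
      rcases hd with rfl | rfl
      · exact Or.inl rfl
      · exact Or.inr ⟨hUadj, hxv'⟩
  have hWsup : ∀ (T : G.Walk u v), IsWeaklyTollWalk G T → ∀ d ∈ T.support, ¬ G.Adj d x := by
    intro T hT d hd hadj
    exact hC1 d hadj (support_subset_wtInterval hT d hd)
  obtain ⟨Q, hQlen⟩ := hGc.exists_walk_length_eq_dist x u
  have hm1 : 1 ≤ Q.length := by
    rcases Nat.eq_zero_or_pos Q.length with h | h
    · exact absurd (Walk.eq_of_length_eq_zero h) hxu
    · exact h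
  classical
  have hex : ∃ i, i ≤ Q.length ∧ (G.Adj u (Q.getVert i) ∨ G.Adj (Q.getVert i) v) := by
    refine ⟨Q.length - 1, by omega, Or.inl ?_⟩
    have h2 := Q.adj_getVert_succ (i := Q.length - 1) (by omega)
    have e : Q.length - 1 + 1 = Q.length := by omega
    rw [e, Walk.getVert_length] at h2
    exact h2.symm
  have hspec := Nat.find_spec hex
  set t := Nat.find hex with htdef
  obtain ⟨htle, htB⟩ := hspec
  have hmin : ∀ i, i < t → ¬ G.Adj u (Q.getVert i) ∧ ¬ G.Adj (Q.getVert i) v := by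
    intro i hi
    have h2 := Nat.find_min hex (htdef ▸ hi)
    push_neg at h2
    exact h2 (by omega)
  have ht1 : 1 ≤ t := by
    rcases Nat.eq_zero_or_pos t with h | h
    · rw [h] at htB
      simp only [Walk.getVert_zero] at htB
      rcases htB with h' | h'
      · exact absurd h' hUadj
      · exact absurd h' hxv'
    · exact h
  obtain ⟨p, hplen, hpg⟩ := exists_prefix Q t htle
  have hpsup : ∀ d ∈ p.support, ∃ i, i ≤ t ∧ d = Q.getVert i := by
    intro d hd
    obtain ⟨n, hn, hnl⟩ := Walk.mem_support_iff_exists_getVert.mp hd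
    rw [hplen] at hnl
    refine ⟨n, hnl, ?_⟩
    rw [← hn, hpg n, min_eq_left hnl]
  have hadjx : ∀ i, i ≤ Q.length → G.Adj x (Q.getVert i) → Q.getVert i = Q.getVert 1 := by
    intro i hi ha
    rw [shortest_adj_start hGc hQlen hi ha]
  by_cases hub : G.Adj u (Q.getVert t)
  · by_cases hbv : G.Adj (Q.getVert t) v
    · -- case A : b is a common neighbor; detour through p gives x ∈ W, contradiction
      obtain ⟨T, hT, hbT⟩ := common_neighbor_mem hnadj hub hbv
      apply hx
      refine detour_mem_wtInterval T hT hbT hub.ne' hbv.ne p.reverse ?_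
      intro d hd
      rw [Walk.support_reverse, List.mem_reverse] at hd
      obtain ⟨i, hi, rfl⟩ := hpsup d hd
      rcases Nat.lt_or_ge i t with h | h
      · exact Or.inr ⟨(hmin i h).1, (hmin i h).2⟩
      · have hit : i = t := by omega
        rw [hit]
        exact Or.inl rfl
    · -- case B : b ∈ N(u) \ N(v)
      have key : ∀ (T : G.Walk u v), IsWeaklyTollWalk G T →
          ∃ F : G.Walk x v, IsWeaklyTollWalk G F ∧ (∀ d ∈ T.support, d ∈ F.support) := by
        intro T hT
        obtain ⟨hTs1, hTs2⟩ := (isWeaklyTollWalk_iff_support T).mp hT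
        have hTlen : 1 ≤ T.length := by
          rcases Nat.eq_zero_or_pos T.length with h | h
          · exact absurd (Walk.eq_of_length_eq_zero h) huv
          · exact h
        set F : G.Walk x v := p.append (Walk.cons hub.symm T) with hFdef
        have hgF1 : F.getVert 1 = Q.getVert 1 := by
          rw [hFdef, getVert_append_left _ _ (by omega : 1 ≤ p.length), hpg 1,
            min_eq_left ht1]
        have hgF2 : F.getVert (F.length - 1) = T.getVert (T.length - 1) := by
          have hFlen : F.length = p.length + (T.length + 1) := by
            simp [hFdef, Walk.length_append, Walk.length_cons]
          have e1 : F.length - 1 = p.length + T.length := by omega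
          rw [e1, hFdef, getVert_append_right]
          obtain ⟨k, hk⟩ : ∃ k, T.length = k + 1 := ⟨T.length - 1, by omega⟩
          rw [hk, Walk.getVert_cons_succ, Nat.add_sub_cancel]
        refine ⟨F, (isWeaklyTollWalk_iff_support F).mpr ⟨?_, ?_⟩, ?_⟩
        · intro d hd hadj
          rw [hgF1]
          rw [hFdef, Walk.mem_support_append_iff] at hd
          rcases hd with hd | hd
          · obtain ⟨i, hi, rfl⟩ := hpsup d hd
            exact hadjx i (by omega) hadj
          · rw [Walk.support_cons, List.mem_cons] at hd
            rcases hd with rfl | hd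
            · exact hadjx t (by omega) hadj
            · exact absurd hadj.symm (hWsup T hT d hd)
        · intro d hd hadj
          rw [hgF2]
          rw [hFdef, Walk.mem_support_append_iff] at hd
          rcases hd with hd | hd
          · obtain ⟨i, hi, rfl⟩ := hpsup d hd
            rcases Nat.lt_or_ge i t with h | h
            · exact absurd hadj (hmin i h).2
            · have hit : i = t := by omega
              rw [hit] at hadj
              exact absurd hadj hbv
          · rw [Walk.support_cons, List.mem_cons] at hd
            rcases hd with rfl | hd
            · exact absurd hadj hbv
            · exact hTs2 d hd hadj
        · intro d hd
          rw [hFdef, Walk.mem_support_append_iff, Walk.support_cons, List.mem_cons]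
          exact Or.inr (Or.inr hd)
      have hsub : insert x (wtInterval G u v) ⊆ wtInterval G x v := by
        intro y hy
        rcases Set.mem_insert_iff.mp hy with rfl | hy
        · obtain ⟨F, hF, _⟩ := key P0 hP0
          exact ⟨F, hF, F.start_mem_support⟩
        · obtain ⟨T, hT, hyT⟩ := hy
          obtain ⟨F, hF, hFsub⟩ := key T hT
          exact ⟨F, hF, hFsub y hyT⟩
      have hcard := Set.ncard_le_ncard hsub (Set.toFinite _)
      rw [Set.ncard_insert_of_notMem hx (Set.toFinite _)] at hcard
      have hmx := hmax x v
      omega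
  · -- case C : b ∈ N(v) \ N(u)
    have hbv : G.Adj (Q.getVert t) v := by
      rcases htB with h | h
      · exact absurd h hub
      · exact h
    have key : ∀ (T : G.Walk u v), IsWeaklyTollWalk G T →
        ∃ F : G.Walk u x, IsWeaklyTollWalk G F ∧ (∀ d ∈ T.support, d ∈ F.support) := by
      intro T hT
      obtain ⟨hTs1, hTs2⟩ := (isWeaklyTollWalk_iff_support T).mp hT
      have hTlen : 1 ≤ T.length := by
        rcases Nat.eq_zero_or_pos T.length with h | h
        · exact absurd (Walk.eq_of_length_eq_zero h) huv
        · exact h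
      set F : G.Walk u x := T.append (Walk.cons hbv.symm p.reverse) with hFdef
      have hgF1 : F.getVert 1 = T.getVert 1 := by
        rw [hFdef, getVert_append_left _ _ hTlen]
      have hgF2 : F.getVert (F.length - 1) = Q.getVert 1 := by
        have hFlen : F.length = T.length + (t + 1) := by
          simp [hFdef, Walk.length_append, Walk.length_cons, Walk.length_reverse, hplen]
        have e1 : F.length - 1 = T.length + t := by omega
        rw [e1, hFdef, getVert_append_right]
        rw [Walk.getVert_cons (hn := by omega), Walk.getVert_reverse]
        have e2 : p.length - (t - 1) = 1 := by omega
        rw [e2, hpg 1, min_eq_left ht1]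
      refine ⟨F, (isWeaklyTollWalk_iff_support F).mpr ⟨?_, ?_⟩, ?_⟩
      · intro d hd hadj
        rw [hgF1]
        rw [hFdef, Walk.mem_support_append_iff] at hd
        rcases hd with hd | hd
        · exact hTs1 d hd hadj
        · rw [Walk.support_cons, List.mem_cons] at hd
          rcases hd with rfl | hd
          · exact absurd hadj hnadj
          · rw [Walk.support_reverse, List.mem_reverse] at hd
            obtain ⟨i, hi, rfl⟩ := hpsup d hd
            rcases Nat.lt_or_ge i t with h | h
            · exact absurd hadj (hmin i h).1
            · have hit : i = t := by omega
              rw [hit] at hadj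
              exact absurd hadj hub
      · intro d hd hadj
        rw [hgF2]
        rw [hFdef, Walk.mem_support_append_iff] at hd
        rcases hd with hd | hd
        · exact absurd hadj (hWsup T hT d hd)
        · rw [Walk.support_cons, List.mem_cons] at hd
          rcases hd with rfl | hd
          · exact absurd hadj hVadj
          · rw [Walk.support_reverse, List.mem_reverse] at hd
            obtain ⟨i, hi, rfl⟩ := hpsup d hd
            exact hadjx i (by omega) hadj.symm
      · intro d hd
        rw [hFdef, Walk.mem_support_append_iff]
        exact Or.inl hd
    have hsub : insert x (wtInterval G u v) ⊆ wtInterval G u x := by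
      intro y hy
      rcases Set.mem_insert_iff.mp hy with rfl | hy
      · obtain ⟨F, hF, _⟩ := key P0 hP0
        exact ⟨F, hF, F.end_mem_support⟩
      · obtain ⟨T, hT, hyT⟩ := hy
        obtain ⟨F, hF, hFsub⟩ := key T hT
        exact ⟨F, hF, hFsub y hyT⟩
    have hcard := Set.ncard_le_ncard hsub (Set.toFinite _)
    rw [Set.ncard_insert_of_notMem hx (Set.toFinite _)] at hcard
    have hmx := hmax u x
    omega

end WTAux

/-- For non-adjacent vertices `u, v` of a finite connected non-complete graph `G`
whose weakly toll interval is of maximum cardinality, setting `W = WT_G(u,v)`,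
`X_u = N[u] \ W`, `X_v = N[v] \ W` and `X = V(G) \ W`, we have `X_u ∩ X_v = ∅` and
`X = X_u ∪ X_v`. -/
theorem maximum_wtInterval_complement {V : Type*} [Fintype V] (G : SimpleGraph V)
    (hGc : G.Connected) (hGnc : G ≠ ⊤) (u v : V)
    (huv : u ≠ v) (hnadj : ¬ G.Adj u v)
    (hmax : ∀ w z : V, (wtInterval G w z).ncard ≤ (wtInterval G u v).ncard) :
    (insert u (G.neighborSet u) \ wtInterval G u v) ∩
        (insert v (G.neighborSet v) \ wtInterval G u v) = ∅ ∧
      Set.univ \ wtInterval G u v =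
        (insert u (G.neighborSet u) \ wtInterval G u v) ∪
          (insert v (G.neighborSet v) \ wtInterval G u v) := by
  obtain ⟨P0, hP0len⟩ := hGc.exists_walk_length_eq_dist u v
  have hP0 : IsWeaklyTollWalk G P0 := WTAux.shortest_isWeaklyTollWalk hGc hP0len
  have hu : u ∈ wtInterval G u v := ⟨P0, hP0, P0.start_mem_support⟩
  have hv : v ∈ wtInterval G u v := ⟨P0, hP0, P0.end_mem_support⟩
  constructor
  · rw [Set.eq_empty_iff_forall_notMem]
    rintro x ⟨⟨hxu, hxW⟩, ⟨hxv, -⟩⟩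
    rcases Set.mem_insert_iff.mp hxu with rfl | hadju
    · exact hxW hu
    rcases Set.mem_insert_iff.mp hxv with rfl | hadjv
    · exact hxW hv
    exact hxW (WTAux.common_neighbor_mem hnadj hadju hadjv.symm)
  · ext x
    simp only [Set.mem_diff, Set.mem_univ, true_and, Set.mem_union, Set.mem_insert_iff,
      SimpleGraph.mem_neighborSet]
    constructor
    · intro hxW
      rcases WTAux.mem_nbhd_of_not_mem hGc huv hnadj hmax hxW with h | h | h | h
      · exact Or.inl ⟨Or.inl h, hxW⟩
      · exact Or.inl ⟨Or.inr h, hxW⟩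
      · exact Or.inr ⟨Or.inl h, hxW⟩
      · exact Or.inr ⟨Or.inr h, hxW⟩
    · rintro (⟨-, h⟩ | ⟨-, h⟩) <;> exact h
end

section
/- Let G and H be finite simple connected non-complete graphs, let g ∈ V(G) and let h1, h2 ∈ V(H) be two non-adjacent vertices of H. Then in the lexicographic product, WT_{G[H]}((g,h1),(g,h2)) = V(G[H]) \ X, where X = { (g,x) ∈ V(G[H]) : x ∉ WT_H(h1,h2) and x is adjacent in H to exactly one of h1 and h2 }. -/
open SimpleGraph

section AuxWT

variable {V : Type*} {G : SimpleGraph V}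

lemma aux_getVert_mem_support {u v : V} (w : G.Walk u v) (i : ℕ) :
    w.getVert i ∈ w.support := by
  rcases le_or_gt i w.length with h | h
  · exact Walk.mem_support_iff_exists_getVert.mpr ⟨i, rfl, h⟩
  · rw [w.getVert_of_length_le h.le]
    exact Walk.end_mem_support w

lemma aux_wt_of_support {u v : V} (w : G.Walk u v)
    (h1 : ∀ p ∈ w.support, G.Adj u p → p = w.getVert 1)
    (h2 : ∀ p ∈ w.support, G.Adj p v → p = w.getVert (w.length - 1)) :
    IsWeaklyTollWalk G w :=
  ⟨fun i _ h => h1 _ (aux_getVert_mem_support w i) h,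
   fun i _ h => h2 _ (aux_getVert_mem_support w i) h⟩

lemma aux_wt_reverse {u v : V} {w : G.Walk u v} (hw : IsWeaklyTollWalk G w) :
    IsWeaklyTollWalk G w.reverse := by
  obtain ⟨hwu, hwv⟩ := hw
  constructor
  · intro i hi hadj
    rw [Walk.getVert_reverse] at hadj ⊢
    rw [Walk.getVert_reverse]
    exact hwv _ (Nat.sub_le _ _) hadj.symm
  · intro i hi hadj
    rw [Walk.length_reverse] at hi
    rw [Walk.getVert_reverse] at hadj ⊢
    rw [Walk.getVert_reverse, Walk.length_reverse]
    rcases Nat.eq_zero_or_pos w.length with h0 | hpos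
    · exfalso
      have he : w.getVert (w.length - i) = u := by
        rw [h0, Nat.zero_sub, Walk.getVert_zero]
      rw [he] at hadj
      exact absurd hadj (G.loopless.irrefl u)
    · have h1 : w.length - (w.length - 1) = 1 := by omega
      rw [h1]
      exact hwu _ (Nat.sub_le _ _) hadj.symm

lemma aux_wtInterval_symm {u v x : V} (h : x ∈ wtInterval G u v) : x ∈ wtInterval G v u := by
  obtain ⟨w, hw, hx⟩ := h
  exact ⟨w.reverse, aux_wt_reverse hw, by simpa [Walk.support_reverse] using hx⟩

lemma aux_mkWT {u v s : V} (M : G.Walk s s) (hus : G.Adj u s) (hsv : G.Adj s v)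
    (huv : ¬ G.Adj u v)
    (hMu : ∀ p ∈ M.support, G.Adj u p → p = s)
    (hMv : ∀ p ∈ M.support, G.Adj p v → p = s) :
    IsWeaklyTollWalk G (Walk.cons hus (M.concat hsv)) := by
  set W := Walk.cons hus (M.concat hsv) with hW
  have hg1 : W.getVert 1 = s := by
    rw [hW, Walk.getVert_cons_succ (n := 0), Walk.getVert_zero]
  have hlen : W.length = M.length + 2 := by
    rw [hW]
    simp [Walk.length_cons, Walk.length_concat]
  have hg2 : W.getVert (W.length - 1) = s := by
    rw [hlen]
    have : M.length + 2 - 1 = M.length + 1 := by omega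
    rw [this, hW, Walk.getVert_cons_succ, Walk.concat_eq_append, Walk.getVert_append]
    simp
  have hsupp : ∀ p ∈ W.support, p = u ∨ p ∈ M.support ∨ p = v := by
    intro p hp
    rw [hW, Walk.support_cons, Walk.support_concat] at hp
    simp only [List.concat_eq_append, List.mem_cons, List.mem_append,
      List.mem_singleton] at hp
    tauto
  apply aux_wt_of_support
  · intro p hp hadj
    rw [hg1]
    rcases hsupp p hp with rfl | h | rfl
    · exact absurd hadj (G.loopless.irrefl _)
    · exact hMu p h hadj
    · exact absurd hadj huv
  · intro p hp hadj
    rw [hg2]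
    rcases hsupp p hp with rfl | h | rfl
    · exact absurd hadj huv
    · exact hMv p h hadj
    · exact absurd hadj (G.loopless.irrefl _)

lemma aux_dist_getVert_le (hc : G.Connected) {u v : V}
    (w : G.Walk u v) (i : ℕ) : G.dist u (w.getVert i) ≤ i := by
  induction i with
  | zero => simp
  | succ n ih =>
    rcases le_or_gt w.length n with h | h
    · rw [w.getVert_of_length_le (h.trans (Nat.le_succ n))]
      rw [w.getVert_of_length_le h] at ih
      exact ih.trans (Nat.le_succ n)
    · have hadj := w.adj_getVert_succ h
      have htri := hc.dist_triangle (u := u) (v := w.getVert n) (w := w.getVert (n + 1))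
      have hle := dist_le (Walk.cons hadj Walk.nil)
      simp only [Walk.length_cons, Walk.length_nil] at hle
      omega

lemma aux_shortest (hc : G.Connected) {u v : V} (w : G.Walk u v)
    (hlen : w.length = G.dist u v) :
    ∀ i ≤ w.length, G.dist u (w.getVert i) = i := by
  intro i hi
  have h1 : G.dist u (w.getVert i) ≤ i := aux_dist_getVert_le hc w i
  have h2 : G.dist v (w.getVert i) ≤ w.length - i := by
    have h := aux_dist_getVert_le hc w.reverse (w.length - i)
    rwa [Walk.getVert_reverse, Nat.sub_sub_self hi] at h
  rw [SimpleGraph.dist_comm] at h2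
  have h3 := hc.dist_triangle (u := u) (v := w.getVert i) (w := v)
  omega

end AuxWT

section AuxLex

variable {V W : Type*} {G : SimpleGraph V} {H : SimpleGraph W}

lemma lexProd_adj {p q : V × W} :
    (lexProd G H).Adj p q ↔ G.Adj p.1 q.1 ∨ (p.1 = q.1 ∧ H.Adj p.2 q.2) := Iff.rfl

/-- Embedding of `H` into the `g`-layer of the lexicographic product. -/
def layerHom (G : SimpleGraph V) (H : SimpleGraph W) (g : V) : H →g lexProd G H :=
  ⟨fun y => (g, y), fun h => lexProd_adj.mpr (Or.inr ⟨rfl, h⟩)⟩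

/-- Embedding of `G` into the product with constant second coordinate `b`. -/
def baseHom (G : SimpleGraph V) (H : SimpleGraph W) (b : W) : G →g lexProd G H :=
  ⟨fun y => (y, b), fun h => lexProd_adj.mpr (Or.inl h)⟩

@[simp] lemma layerHom_apply (g : V) (y : W) : layerHom G H g y = (g, y) := rfl

@[simp] lemma baseHom_apply (b : W) (y : V) : baseHom G H b y = (y, b) := rfl

lemma aux_getVert_map {V' W' : Type*} {G1 : SimpleGraph V'} {G2 : SimpleGraph W'}
    (f : G1 →g G2) {u v : V'} (w : G1.Walk u v) (i : ℕ) :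
    (w.map f).getVert i = f (w.getVert i) := by
  induction w generalizing i with
  | nil => rfl
  | cons h q ih =>
    cases i with
    | zero => simp
    | succ n => simpa using ih n

lemma aux_lift (G : SimpleGraph V) (H : SimpleGraph W) (g : V) (h1 h2 x : W)
    (hx : x ∈ wtInterval H h1 h2) :
    (g, x) ∈ wtInterval (lexProd G H) (g, h1) (g, h2) := by
  obtain ⟨w, hw, hxw⟩ := hx
  have hlm : @Walk.length _ (lexProd G H) (g, h1) (g, h2) (w.map (layerHom G H g)) = w.length :=
    Walk.length_map _ _
  have hgm : ∀ j, @Walk.getVert _ (lexProd G H) (g, h1) (g, h2) (w.map (layerHom G H g)) j =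
      (g, w.getVert j) := fun j => aux_getVert_map _ w j
  have hsm : @Walk.support _ (lexProd G H) (g, h1) (g, h2) (w.map (layerHom G H g)) =
      w.support.map (layerHom G H g) := Walk.support_map _ _
  refine ⟨w.map (layerHom G H g), ⟨?_, ?_⟩, ?_⟩
  · intro i hi hadj
    rw [hlm] at hi
    rw [hgm] at hadj
    rw [hgm, hgm]
    have hH : H.Adj h1 (w.getVert i) := by
      rcases lexProd_adj.mp hadj with hG | ⟨-, hH⟩
      · exact absurd hG (G.loopless.irrefl g)
      · exact hH
    rw [hw.1 i hi hH]
  · intro i hi hadj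
    rw [hlm] at hi
    rw [hgm] at hadj
    rw [hlm, hgm, hgm]
    have hH : H.Adj (w.getVert i) h2 := by
      rcases lexProd_adj.mp hadj with hG | ⟨-, hH⟩
      · exact absurd hG (G.loopless.irrefl g)
      · exact hH
    rw [hw.2 i hi hH]
  · rw [hsm]
    exact List.mem_map_of_mem hxw

lemma aux_project (G : SimpleGraph V) (H : SimpleGraph W) (g : V) :
    ∀ {p q : V × W} (w : (lexProd G H).Walk p q), (∀ r ∈ w.support, r.1 = g) →
      ∃ w' : H.Walk p.2 q.2, w'.length = w.length ∧ ∀ i, w.getVert i = (g, w'.getVert i) := by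
  intro p q w
  induction w with
  | nil =>
    intro hs
    refine ⟨Walk.nil, rfl, fun i => ?_⟩
    have hp := hs _ (Walk.start_mem_support _)
    exact Prod.ext_iff.mpr ⟨hp, rfl⟩
  | @cons x y z hadj rest ih =>
    intro hs
    have hx : x.1 = g := hs x (Walk.start_mem_support _)
    have hy : y.1 = g := hs y (by simp)
    have hadjH : H.Adj x.2 y.2 := by
      rcases lexProd_adj.mp hadj with hG | ⟨-, hH⟩
      · rw [hx, hy] at hG
        exact absurd hG (G.loopless.irrefl g)
      · exact hH
    obtain ⟨w', hlen, hgv⟩ := ih (fun r hr => hs r (by simp [hr]))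
    refine ⟨Walk.cons hadjH w', by simp [hlen], fun i => ?_⟩
    cases i with
    | zero =>
      simp only [Walk.getVert_zero]
      exact Prod.ext_iff.mpr ⟨hx, rfl⟩
    | succ n => simpa using hgv n

lemma aux_stay (G : SimpleGraph V) (H : SimpleGraph W) (g : V) (h1 h2 x : W)
    (hx : H.Adj x h1) (w : (lexProd G H).Walk (g, h1) (g, h2))
    (hw : IsWeaklyTollWalk (lexProd G H) w) (hmem : (g, x) ∈ w.support) :
    x ∈ wtInterval H h1 h2 := by
  obtain ⟨j, hj, hjle⟩ := Walk.mem_support_iff_exists_getVert.mp hmem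
  have hadj_u : (lexProd G H).Adj (g, h1) (g, x) := lexProd_adj.mpr (Or.inr ⟨rfl, hx.symm⟩)
  have h1v : w.getVert 1 = (g, x) := by
    have h' := hw.1 j hjle (by rw [hj]; exact hadj_u)
    rw [hj] at h'
    exact h'.symm
  have hlayer : ∀ i, i ≤ w.length → (w.getVert i).1 = g := by
    intro i
    induction i with
    | zero => intro _; simp
    | succ n ihn =>
      intro hn1
      have hadj := w.adj_getVert_succ (by omega : n < w.length)
      rcases lexProd_adj.mp hadj with hG | ⟨he, -⟩
      · have hadj' : (lexProd G H).Adj (g, h1) (w.getVert (n + 1)) := by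
          refine lexProd_adj.mpr (Or.inl ?_)
          rw [ihn (by omega)] at hG
          exact hG
        rw [hw.1 (n + 1) hn1 hadj', h1v]
      · rw [← he]
        exact ihn (by omega)
  have hall : ∀ r ∈ w.support, r.1 = g := by
    intro r hr
    obtain ⟨i, hi, hile⟩ := Walk.mem_support_iff_exists_getVert.mp hr
    rw [← hi]
    exact hlayer i hile
  obtain ⟨w', hlen, hgv⟩ := aux_project G H g w hall
  refine ⟨w', ⟨?_, ?_⟩, Walk.mem_support_iff_exists_getVert.mpr ⟨j, ?_, ?_⟩⟩
  · intro i hi hHadj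
    have hi' : i ≤ w.length := hlen ▸ hi
    have hadj' : (lexProd G H).Adj (g, h1) (w.getVert i) := by
      rw [hgv i]
      exact lexProd_adj.mpr (Or.inr ⟨rfl, hHadj⟩)
    have h' := hw.1 i hi' hadj'
    rw [hgv i, hgv 1] at h'
    exact congrArg Prod.snd h'
  · intro i hi hHadj
    have hi' : i ≤ w.length := hlen ▸ hi
    have hadj' : (lexProd G H).Adj (w.getVert i) (g, h2) := by
      rw [hgv i]
      exact lexProd_adj.mpr (Or.inr ⟨rfl, hHadj⟩)
    have h' := hw.2 i hi' hadj'
    rw [hgv i, hgv (w.length - 1)] at h'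
    rw [hlen]
    exact congrArg Prod.snd h'
  · have := hgv j
    rw [hj] at this
    exact (congrArg Prod.snd this).symm
  · omega

end AuxLex

/-- In the lexicographic product of finite connected non-complete graphs `G`,
`H`, for `g ∈ V(G)` and non-adjacent `h1, h2 ∈ V(H)`,
`WT_{G[H]}((g,h1),(g,h2)) = V(G[H]) \ X`, where `X` consists of the vertices `(g,x)` with
`x ∉ WT_H(h1,h2)` adjacent in `H` to exactly one of `h1`, `h2`. -/
theorem wtInterval_lexProd_same_layer {V W : Type*} [Fintype V] [Fintype W]
    (G : SimpleGraph V) (H : SimpleGraph W)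
    (hGc : G.Connected) (hHc : H.Connected)
    (hGnc : G ≠ ⊤) (hHnc : H ≠ ⊤)
    (g : V) (h1 h2 : W) (hne : h1 ≠ h2) (hnadj : ¬ H.Adj h1 h2) :
    wtInterval (lexProd G H) (g, h1) (g, h2) =
      Set.univ \ {p : V × W | p.1 = g ∧ p.2 ∉ wtInterval H h1 h2 ∧
        Xor' (H.Adj p.2 h1) (H.Adj p.2 h2)} := by
  have hnadjP : ¬ (lexProd G H).Adj (g, h1) (g, h2) := by
    intro h
    rcases lexProd_adj.mp h with hG | ⟨-, hH⟩
    · exact G.loopless.irrefl g hG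
    · exact hnadj hH
  have hGne : ∃ c d : V, c ≠ d ∧ ¬ G.Adj c d := by
    by_contra hcon
    push_neg at hcon
    apply hGnc
    ext c d
    simp only [top_adj]
    exact ⟨G.ne_of_adj, fun h => hcon c d h⟩
  have hnbr : ∃ g' : V, G.Adj g g' := by
    obtain ⟨c, d, hcd, -⟩ := hGne
    have hex : ∃ e : V, e ≠ g := by
      by_cases h : g = c
      · exact ⟨d, fun hd => hcd (h.symm.trans hd.symm)⟩
      · exact ⟨c, fun hc => h hc.symm⟩
    obtain ⟨e, he⟩ := hex
    obtain ⟨w⟩ := hGc.preconnected g e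
    have hl : w.length ≠ 0 := fun h0 => he (Walk.eq_of_length_eq_zero h0).symm
    have := w.adj_getVert_succ (Nat.pos_of_ne_zero hl)
    rw [Walk.getVert_zero] at this
    exact ⟨w.getVert 1, this⟩
  ext ⟨a, b⟩
  simp only [Set.mem_diff, Set.mem_univ, true_and, Set.mem_setOf_eq]
  constructor
  · rintro ⟨w, hw, hmem⟩ ⟨rfl, hbwt, hxor⟩
    rcases (show (H.Adj b h1 ∧ ¬ H.Adj b h2) ∨ (H.Adj b h2 ∧ ¬ H.Adj b h1) from hxor) with
      ⟨hb1, -⟩ | ⟨hb2, -⟩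
    · exact hbwt (aux_stay G H a h1 h2 b hb1 w hw hmem)
    · have hrev := aux_stay G H a h2 h1 b hb2 w.reverse (aux_wt_reverse hw)
        (by simpa [Walk.support_reverse] using hmem)
      exact hbwt (aux_wtInterval_symm hrev)
  · intro hX
    by_cases hag : a = g
    · subst hag
      by_cases hbwt : b ∈ wtInterval H h1 h2
      · exact aux_lift G H a h1 h2 b hbwt
      · by_cases hb1 : H.Adj b h1 <;> by_cases hb2 : H.Adj b h2
        · -- adjacent to both: b would be in the interval, contradiction
          exact absurd
            ⟨Walk.cons hb1.symm (Walk.nil.concat hb2),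
              aux_mkWT Walk.nil hb1.symm hb2 hnadj
                (by intro p hp _; simpa using hp) (by intro p hp _; simpa using hp),
              by simp⟩ hbwt
        · exact absurd ⟨rfl, hbwt, show Xor' _ _ from Or.inl ⟨hb1, hb2⟩⟩ hX
        · exact absurd ⟨rfl, hbwt, show Xor' _ _ from Or.inr ⟨hb2, hb1⟩⟩ hX
        · -- adjacent to neither: detour through a neighbouring layer
          obtain ⟨g', hgg'⟩ := hnbr
          have e1 : (lexProd G H).Adj (g', b) (a, b) := lexProd_adj.mpr (Or.inl hgg'.symm)
          have e2 : (lexProd G H).Adj (a, b) (g', b) := lexProd_adj.mpr (Or.inl hgg')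
          have hus : (lexProd G H).Adj (a, h1) (g', b) := lexProd_adj.mpr (Or.inl hgg')
          have hsv : (lexProd G H).Adj (g', b) (a, h2) := lexProd_adj.mpr (Or.inl hgg'.symm)
          set M : (lexProd G H).Walk (g', b) (g', b) :=
            Walk.cons e1 (Walk.cons e2 Walk.nil) with hM
          have hMcase : ∀ s ∈ M.support, s = (g', b) ∨ s = (a, b) := by
            intro s hs
            rw [hM] at hs
            simp only [Walk.support_cons, Walk.support_nil, List.mem_cons,
              List.mem_singleton, List.not_mem_nil, or_false] at hs
            tauto
          have hMu : ∀ s ∈ M.support, (lexProd G H).Adj (a, h1) s → s = (g', b) := by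
            intro s hs hadj'
            rcases hMcase s hs with rfl | rfl
            · rfl
            · rcases lexProd_adj.mp hadj' with hG | ⟨-, hH⟩
              · exact absurd hG (G.loopless.irrefl a)
              · exact absurd hH.symm hb1
          have hMv : ∀ s ∈ M.support, (lexProd G H).Adj s (a, h2) → s = (g', b) := by
            intro s hs hadj'
            rcases hMcase s hs with rfl | rfl
            · rfl
            · rcases lexProd_adj.mp hadj' with hG | ⟨-, hH⟩
              · exact absurd hG (G.loopless.irrefl a)
              · exact absurd hH hb2
          refine ⟨Walk.cons hus (M.concat hsv), aux_mkWT M hus hsv hnadjP hMu hMv, ?_⟩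
          rw [Walk.support_cons, Walk.support_concat]
          simp only [List.mem_cons, List.concat_eq_append, List.mem_append,
            List.mem_singleton]
          refine Or.inr (Or.inl ?_)
          rw [hM]
          simp
    · -- a is in a different layer: go out along a shortest path and come back
      obtain ⟨p, hp⟩ := (hGc.preconnected g a).exists_walk_length_eq_dist
      have hd : ∀ i ≤ p.length, G.dist g (p.getVert i) = i := aux_shortest hGc p hp
      cases p with
      | nil => exact absurd rfl hag
      | @cons _ g1 _ hadj q =>
        have hqd : ∀ i ≤ q.length, G.dist g (q.getVert i) = i + 1 := by
          intro i hi
          have := hd (i + 1) (by simpa [Walk.length_cons] using Nat.succ_le_succ hi)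
          simpa using this
        have hkey : ∀ y ∈ q.support, y ≠ g ∧ (G.Adj g y → y = g1) := by
          intro y hy
          obtain ⟨i, hiv, hile⟩ := Walk.mem_support_iff_exists_getVert.mp hy
          subst hiv
          constructor
          · intro hyg
            have h' := hqd i hile
            rw [hyg, SimpleGraph.dist_self] at h'
            omega
          · intro hadj'
            have h1' := hqd i hile
            have h2' : G.dist g (q.getVert i) ≤ 1 := by
              have := dist_le (Walk.cons hadj' Walk.nil)
              simpa using this
            have hi0 : i = 0 := by omega
            subst hi0
            exact Walk.getVert_zero q
        set r : (lexProd G H).Walk (g1, b) (a, b) := q.map (baseHom G H b) with hr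
        set M : (lexProd G H).Walk (g1, b) (g1, b) := r.append r.reverse with hM
        have hus : (lexProd G H).Adj (g, h1) (g1, b) := lexProd_adj.mpr (Or.inl hadj)
        have hsv : (lexProd G H).Adj (g1, b) (g, h2) := lexProd_adj.mpr (Or.inl hadj.symm)
        have hMsub : ∀ s ∈ M.support, ∃ y ∈ q.support, s = (y, b) := by
          intro s hs
          have hsr : s ∈ r.support := by
            rw [hM, Walk.support_append] at hs
            rcases List.mem_append.mp hs with h' | h'
            · exact h'
            · have h'' : s ∈ r.reverse.support := List.mem_of_mem_tail h'
              rwa [Walk.support_reverse, List.mem_reverse] at h''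
          have hsm : @Walk.support _ (lexProd G H) (g1, b) (a, b) (q.map (baseHom G H b)) =
              q.support.map (baseHom G H b) := Walk.support_map _ _
          rw [hr, hsm] at hsr
          obtain ⟨y, hy, hye⟩ := List.mem_map.mp hsr
          exact ⟨y, hy, hye.symm⟩
        have hMu : ∀ s ∈ M.support, (lexProd G H).Adj (g, h1) s → s = (g1, b) := by
          intro s hs hadj'
          obtain ⟨y, hy, rfl⟩ := hMsub s hs
          rcases lexProd_adj.mp hadj' with hG | ⟨he, -⟩
          · rw [(hkey y hy).2 hG]
          · exact absurd he.symm (hkey y hy).1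
        have hMv : ∀ s ∈ M.support, (lexProd G H).Adj s (g, h2) → s = (g1, b) := by
          intro s hs hadj'
          obtain ⟨y, hy, rfl⟩ := hMsub s hs
          rcases lexProd_adj.mp hadj' with hG | ⟨he, -⟩
          · rw [(hkey y hy).2 hG.symm]
          · exact absurd he (hkey y hy).1
        refine ⟨Walk.cons hus (M.concat hsv), aux_mkWT M hus hsv hnadjP hMu hMv, ?_⟩
        have hab : (a, b) ∈ r.support := by
          have := Walk.end_mem_support r
          exact this
        have hMmem : (a, b) ∈ M.support := by
          rw [hM, Walk.support_append]
          exact List.mem_append.mpr (Or.inl hab)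
        rw [Walk.support_cons, Walk.support_concat]
        simp only [List.mem_cons, List.concat_eq_append, List.mem_append,
          List.mem_singleton]
        exact Or.inr (Or.inl hMmem)
end

section
/- Let G and H be finite simple connected non-complete graphs, let g ∈ V(G) and let h1, h2 ∈ V(H) be non-adjacent vertices of H, giving non-adjacent vertices (g,h1), (g,h2) of the copy H^g in the corona product G ∘ H. Then WT_{G∘H}((g,h1),(g,h2)) = V(G ∘ H) \ X, where X = { (g,x) : x ∈ V(H), x ∉ WT_{H^g}((g,h1),(g,h2)) computed inside the copy H^g, and x is adjacent in H to exactly one of h1 and h2 }. -/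
open SimpleGraph

section Auxiliary

variable {V W : Type*} {G : SimpleGraph V} {H : SimpleGraph W}

lemma corona_adj_inl_inl {g g' : V} :
    (corona G H).Adj (Sum.inl g) (Sum.inl g') ↔ G.Adj g g' := Iff.rfl
lemma corona_adj_inl_inr {g : V} {p : V × W} :
    (corona G H).Adj (Sum.inl g) (Sum.inr p) ↔ g = p.1 := Iff.rfl
lemma corona_adj_inr_inl {g : V} {p : V × W} :
    (corona G H).Adj (Sum.inr p) (Sum.inl g) ↔ p.1 = g := Iff.rfl
lemma corona_adj_inr_inr {p q : V × W} :
    (corona G H).Adj (Sum.inr p) (Sum.inr q) ↔ p.1 = q.1 ∧ H.Adj p.2 q.2 := Iff.rfl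

lemma getVert_map' {V' W' : Type*} {G' : SimpleGraph V'} {H' : SimpleGraph W'}
    (f : G' →g H') {u v : V'} (w : G'.Walk u v) (i : ℕ) :
    (w.map f).getVert i = f (w.getVert i) := by
  induction w generalizing i with
  | nil => simp [Walk.getVert]
  | cons h p ih => cases i <;> simp [Walk.getVert, ih]

/-- The embedding of `H` as the copy over `g` in the corona product. -/
def copyHom (G : SimpleGraph V) (H : SimpleGraph W) (g : V) : H →g corona G H where
  toFun x := Sum.inr (g, x)
  map_rel' := fun h => ⟨rfl, h⟩

@[simp] lemma copyHom_apply (g : V) (x : W) : copyHom G H g x = Sum.inr (g, x) := rfl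

/-- The embedding of `G` in the corona product. -/
def inlHom (G : SimpleGraph V) (H : SimpleGraph W) : G →g corona G H where
  toFun := Sum.inl
  map_rel' := fun h => h

@[simp] lemma inlHom_apply (g : V) : inlHom G H g = Sum.inl g := rfl

lemma isWTW_of_support {u v : V} {w : G.Walk u v}
    (h1 : ∀ z ∈ w.support, G.Adj u z → z = w.getVert 1)
    (h2 : ∀ z ∈ w.support, G.Adj z v → z = w.getVert (w.length - 1)) :
    IsWeaklyTollWalk G w := by
  constructor <;> intro i hi hadj
  · exact h1 _ (Walk.mem_support_iff_exists_getVert.2 ⟨i, rfl, hi⟩) hadj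
  · exact h2 _ (Walk.mem_support_iff_exists_getVert.2 ⟨i, rfl, hi⟩) hadj

lemma sandwich {u v m : V}
    (hum : G.Adj u m) (hmv : G.Adj m v) (huv : ¬ G.Adj u v)
    (w0 : G.Walk m m)
    (hcond : ∀ z ∈ w0.support, (G.Adj u z → z = m) ∧ (G.Adj z v → z = m)) :
    IsWeaklyTollWalk G (Walk.cons hum (w0.concat hmv)) := by
  set Wt := Walk.cons hum (w0.concat hmv) with hW
  have hg1 : Wt.getVert 1 = m := by
    rw [hW, Walk.getVert_cons_succ, Walk.getVert_zero]
  have hlen : Wt.length = w0.length + 2 := by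
    simp [hW, Walk.length_concat]
  have hg2 : Wt.getVert (Wt.length - 1) = m := by
    rw [hlen]
    show Wt.getVert (w0.length + 1) = m
    rw [hW, Walk.getVert_cons_succ, Walk.concat, Walk.getVert_append]
    simp
  have hsup : ∀ z ∈ Wt.support, z = u ∨ z ∈ w0.support ∨ z = v := by
    intro z hz
    rw [hW, Walk.support_cons] at hz
    rcases List.mem_cons.1 hz with h | h
    · exact Or.inl h
    · rw [Walk.support_concat, List.mem_append] at h
      rcases h with h | h
      · exact Or.inr (Or.inl h)
      · exact Or.inr (Or.inr (List.mem_singleton.1 h))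
  apply isWTW_of_support <;> intro z hz hadj <;>
    rcases hsup z hz with rfl | h | rfl
  · exact absurd hadj (G.loopless.irrefl _)
  · rw [hg1]; exact (hcond z h).1 hadj
  · exact absurd hadj huv
  · exact absurd hadj huv
  · rw [hg2]; exact (hcond z h).2 hadj
  · exact absurd hadj (G.loopless.irrefl _)

lemma mem_support_sandwich {u v m : V}
    (hum : G.Adj u m) (hmv : G.Adj m v) (w0 : G.Walk m m) {z : V}
    (hz : z ∈ w0.support) : z ∈ (Walk.cons hum (w0.concat hmv)).support := by
  rw [Walk.support_cons, Walk.support_concat]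
  exact List.mem_cons_of_mem _ (by rw [List.mem_append]; exact Or.inl hz)

lemma corona_pullback (G : SimpleGraph V) (H : SimpleGraph W) (g : V) :
    ∀ (s t : V ⊕ V × W) (w : (corona G H).Walk s t) (a b : W),
      s = Sum.inr (g, a) → t = Sum.inr (g, b) →
      Sum.inl g ∉ w.support →
      ∃ w' : H.Walk a b, w'.length = w.length ∧
        ∀ i, Sum.inr (g, w'.getVert i) = w.getVert i := by
  intro s t w
  induction w with
  | nil =>
    rintro a b rfl ht hg
    have hab : a = b := (Prod.ext_iff.1 (Sum.inr.inj ht)).2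
    subst hab
    exact ⟨Walk.nil, rfl, fun i => rfl⟩
  | @cons s c t h p ih =>
    rintro a b rfl ht hg
    rw [Walk.support_cons, List.mem_cons] at hg
    push_neg at hg
    obtain ⟨hg1, hg2⟩ := hg
    obtain (g₂ | q) := c
    · have : g = g₂ := corona_adj_inr_inl.1 h
      subst this
      exact absurd (Walk.start_mem_support p) (fun hh => hg2 hh)
    · obtain ⟨hq1, hq2⟩ := corona_adj_inr_inr.1 h
      have hceq : Sum.inr q = (Sum.inr (g, q.2) : V ⊕ V × W) := by
        rw [show g = q.1 from hq1, Prod.mk.eta]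
      obtain ⟨w'', hlen, hcorr⟩ := ih q.2 b hceq ht hg2
      refine ⟨Walk.cons hq2 w'', by simp [hlen], ?_⟩
      intro i
      cases i with
      | zero => simp
      | succ n => rw [Walk.getVert_cons_succ, Walk.getVert_cons_succ]; exact hcorr n

lemma corona_pushforward {g : V} {a b : W} (w : H.Walk a b)
    (hw : IsWeaklyTollWalk H w) :
    IsWeaklyTollWalk (corona G H) (w.map (copyHom G H g)) := by
  obtain ⟨c1, c2⟩ := hw
  constructor <;> intro i hi hadj <;>
    rw [Walk.length_map] at hi <;>
    rw [getVert_map'] at hadj <;>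
    rw [getVert_map', getVert_map']
  · have h' : H.Adj a (w.getVert i) := (corona_adj_inr_inr.1 hadj).2
    rw [c1 i hi h']
  · have h' : H.Adj (w.getVert i) b := (corona_adj_inr_inr.1 hadj).2
    rw [Walk.length_map, c2 i hi h']

end Auxiliary

/-- In the corona product of finite connected non-complete graphs `G`, `H`,
for `g ∈ V(G)` and non-adjacent `h1, h2 ∈ V(H)`,
`WT_{G∘H}((g,h1),(g,h2)) = V(G∘H) \ X`, where `X` consists of the vertices `(g,x)` of the
copy `H^g` with `x ∉ WT(h1,h2)` (computed inside the copy `H^g ≅ H`) adjacent in `H` to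
exactly one of `h1`, `h2`. -/
theorem wtInterval_corona_same_copy {V W : Type*} [Fintype V] [Fintype W]
    (G : SimpleGraph V) (H : SimpleGraph W)
    (hGc : G.Connected) (hHc : H.Connected)
    (hGnc : G ≠ ⊤) (hHnc : H ≠ ⊤)
    (g : V) (h1 h2 : W) (hne : h1 ≠ h2) (hnadj : ¬ H.Adj h1 h2) :
    wtInterval (corona G H) (Sum.inr (g, h1)) (Sum.inr (g, h2)) =
      Set.univ \ {z : V ⊕ V × W | ∃ x : W, z = Sum.inr (g, x) ∧
        x ∉ wtInterval H h1 h2 ∧ Xor' (H.Adj x h1) (H.Adj x h2)} := by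
  classical
  have hu : (corona G H).Adj (Sum.inr (g, h1)) (Sum.inl g) := corona_adj_inr_inl.2 rfl
  have hv : (corona G H).Adj (Sum.inl g) (Sum.inr (g, h2)) := corona_adj_inl_inr.2 rfl
  have huv : ¬ (corona G H).Adj (Sum.inr (g, h1)) (Sum.inr (g, h2)) :=
    fun h => hnadj (corona_adj_inr_inr.1 h).2
  ext z
  simp only [Set.mem_diff, Set.mem_univ, true_and, Set.mem_setOf_eq]
  constructor
  · rintro ⟨w, hw, hzsup⟩
    rintro ⟨x, rfl, hxWT, hxor⟩
    obtain ⟨j, hj, hjle⟩ := Walk.mem_support_iff_exists_getVert.1 hzsup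
    have hinl : Sum.inl g ∉ w.support := by
      intro hgmem
      obtain ⟨i, hi, hile⟩ := Walk.mem_support_iff_exists_getVert.1 hgmem
      rcases hxor with ⟨hx1, hx2⟩ | ⟨hx2, hx1⟩
      · have e1 := hw.1 i hile (by rw [hi]; exact corona_adj_inr_inl.2 rfl)
        have e2 := hw.1 j hjle (by rw [hj]; exact corona_adj_inr_inr.2 ⟨rfl, hx1.symm⟩)
        rw [hi] at e1
        rw [hj] at e2
        exact absurd (e2.trans e1.symm) (by simp)
      · have e1 := hw.2 i hile (by rw [hi]; exact corona_adj_inl_inr.2 rfl)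
        have e2 := hw.2 j hjle (by rw [hj]; exact corona_adj_inr_inr.2 ⟨rfl, hx2⟩)
        rw [hi] at e1
        rw [hj] at e2
        exact absurd (e2.trans e1.symm) (by simp)
    obtain ⟨w', hlen, hcorr⟩ := corona_pullback G H g _ _ w h1 h2 rfl rfl hinl
    apply hxWT
    have hwt' : IsWeaklyTollWalk H w' := by
      constructor <;> intro i hi hadj
      · have e := hw.1 i (by omega) (by rw [← hcorr i]; exact corona_adj_inr_inr.2 ⟨rfl, hadj⟩)
        rw [← hcorr i, ← hcorr 1] at e
        exact (Prod.ext_iff.1 (Sum.inr.inj e)).2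
      · have e := hw.2 i (by omega)
          (by rw [← hcorr i]; exact corona_adj_inr_inr.2 ⟨rfl, hadj⟩)
        rw [← hcorr i, ← hcorr (w.length - 1)] at e
        have := (Prod.ext_iff.1 (Sum.inr.inj e)).2
        rwa [← hlen] at this
    refine ⟨w', hwt', Walk.mem_support_iff_exists_getVert.2 ⟨j, ?_, by omega⟩⟩
    have := hcorr j
    rw [hj] at this
    exact (Prod.ext_iff.1 (Sum.inr.inj this)).2
  · intro hzX
    have hcondinl : ∀ g'' : V,
        ((corona G H).Adj (Sum.inr (g, h1)) (Sum.inl g'') → (Sum.inl g'' : V ⊕ V × W) = Sum.inl g) ∧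
        ((corona G H).Adj (Sum.inl g'') (Sum.inr (g, h2)) → (Sum.inl g'' : V ⊕ V × W) = Sum.inl g) := by
      intro g''
      constructor
      · intro h; rw [show g = g'' from corona_adj_inr_inl.1 h]
      · intro h; rw [show g'' = g from corona_adj_inl_inr.1 h]
    obtain (g' | ⟨g', x⟩) := z
    · -- a vertex of G
      obtain ⟨Q⟩ := hGc.preconnected g g'
      set Qc := Q.map (inlHom G H) with hQc
      set w0 := Qc.append Qc.reverse with hw0
      have hmem : ∀ z' ∈ w0.support, ∃ g'', z' = Sum.inl g'' := by
        intro z' hz'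
        rw [hw0, Walk.support_append, List.mem_append] at hz'
        have : z' ∈ Qc.support ∨ z' ∈ Qc.reverse.support := by
          rcases hz' with h | h
          · exact Or.inl h
          · exact Or.inr (List.mem_of_mem_tail h)
        rw [Walk.support_reverse] at this
        have hz2 : z' ∈ Qc.support := by
          rcases this with h | h
          · exact h
          · exact List.mem_reverse.1 h
        rw [hQc, Walk.support_map] at hz2
        obtain ⟨g'', _, rfl⟩ := List.mem_map.1 hz2
        exact ⟨g'', rfl⟩
      refine ⟨Walk.cons hu (w0.concat hv), sandwich hu hv huv w0 ?_, ?_⟩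
      · intro z' hz'
        obtain ⟨g'', rfl⟩ := hmem z' hz'
        exact hcondinl g''
      · refine mem_support_sandwich hu hv w0 ?_
        erw [hw0, Walk.support_append, List.mem_append]
        left
        erw [hQc, Walk.support_map]
        exact List.mem_map.2 ⟨g', Walk.end_mem_support Q, rfl⟩
    · by_cases hg' : g = g'
      · subst hg'
        by_cases a1 : H.Adj x h1 <;> by_cases a2 : H.Adj x h2
        · -- adjacent to both
          have e1 : (corona G H).Adj (Sum.inr (g, h1)) (Sum.inr (g, x)) :=
            corona_adj_inr_inr.2 ⟨rfl, a1.symm⟩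
          have e2 : (corona G H).Adj (Sum.inr (g, x)) (Sum.inr (g, h2)) :=
            corona_adj_inr_inr.2 ⟨rfl, a2⟩
          refine ⟨Walk.cons e1 (Walk.cons e2 Walk.nil), ?_, by simp⟩
          apply isWTW_of_support <;> intro z' hz' hadj <;>
            simp only [Walk.support_cons, Walk.support_nil, List.mem_cons,
              List.mem_singleton, List.mem_nil_iff, or_false] at hz' <;>
            rcases hz' with rfl | rfl | rfl
          · exact absurd hadj ((corona G H).loopless.irrefl _)
          · rfl
          · exact absurd hadj huv
          · exact absurd hadj huv
          · rfl
          · exact absurd hadj ((corona G H).loopless.irrefl _)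
        · -- adjacent to h1 only : x must be in the interval
          have hxWT : x ∈ wtInterval H h1 h2 := by
            by_contra hnx
            exact hzX ⟨x, rfl, hnx, Or.inl ⟨a1, a2⟩⟩
          obtain ⟨wH, hwH, hxs⟩ := hxWT
          refine ⟨wH.map (copyHom G H g), corona_pushforward wH hwH, ?_⟩
          erw [Walk.support_map]
          exact List.mem_map.2 ⟨x, hxs, rfl⟩
        · -- adjacent to h2 only
          have hxWT : x ∈ wtInterval H h1 h2 := by
            by_contra hnx
            exact hzX ⟨x, rfl, hnx, Or.inr ⟨a2, a1⟩⟩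
          obtain ⟨wH, hwH, hxs⟩ := hxWT
          refine ⟨wH.map (copyHom G H g), corona_pushforward wH hwH, ?_⟩
          erw [Walk.support_map]
          exact List.mem_map.2 ⟨x, hxs, rfl⟩
        · -- adjacent to neither
          have e1 : (corona G H).Adj (Sum.inl g) (Sum.inr (g, x)) := corona_adj_inl_inr.2 rfl
          set w0 := Walk.cons e1 (Walk.cons e1.symm Walk.nil) with hw0
          refine ⟨Walk.cons hu (w0.concat hv), sandwich hu hv huv w0 ?_, ?_⟩
          · intro z' hz'
            simp only [hw0, Walk.support_cons, Walk.support_nil, List.mem_cons,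
              List.mem_singleton, List.mem_nil_iff, or_false] at hz'
            rcases hz' with rfl | rfl | rfl
            · exact hcondinl g
            · constructor
              · intro h; exact absurd (corona_adj_inr_inr.1 h).2 (fun hh => a1 hh.symm)
              · intro h; exact absurd (corona_adj_inr_inr.1 h).2 a2
            · exact hcondinl g
          · refine mem_support_sandwich hu hv w0 ?_
            simp [hw0]
      · -- a vertex of another copy
        obtain ⟨Q⟩ := hGc.preconnected g g'
        set Qc := Q.map (inlHom G H) with hQc
        have ed : (corona G H).Adj (Sum.inl g') (Sum.inr (g', x)) := corona_adj_inl_inr.2 rfl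
        set D := Walk.cons ed (Walk.cons ed.symm Walk.nil) with hD
        set w0 := Qc.append (D.append Qc.reverse) with hw0
        have hmem : ∀ z' ∈ w0.support,
            (∃ g'', z' = Sum.inl g'') ∨ z' = Sum.inr (g', x) := by
          intro z' hz'
          erw [hw0, Walk.support_append, List.mem_append] at hz'
          have hz2 : z' ∈ Qc.support ∨ z' ∈ (D.append Qc.reverse).support := by
            rcases hz' with h | h
            · exact Or.inl h
            · exact Or.inr (List.mem_of_mem_tail h)
          have hQmem : ∀ z'' ∈ Qc.support, ∃ g'', z'' = Sum.inl g'' := by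
            intro z'' hz''
            rw [hQc, Walk.support_map] at hz''
            obtain ⟨g'', _, rfl⟩ := List.mem_map.1 hz''
            exact ⟨g'', rfl⟩
          rcases hz2 with h | h
          · exact Or.inl (hQmem z' h)
          · erw [Walk.support_append, List.mem_append] at h
            rcases h with h | h
            · simp only [hD, Walk.support_cons, Walk.support_nil, List.mem_cons,
                List.mem_singleton, List.mem_nil_iff, or_false] at h
              rcases h with rfl | rfl | rfl
              · exact Or.inl ⟨g', rfl⟩
              · exact Or.inr rfl
              · exact Or.inl ⟨g', rfl⟩
            · have := List.mem_of_mem_tail h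
              erw [Walk.support_reverse, List.mem_reverse] at this
              exact Or.inl (hQmem z' this)
        refine ⟨Walk.cons hu (w0.concat hv), sandwich hu hv huv w0 ?_, ?_⟩
        · intro z' hz'
          rcases hmem z' hz' with ⟨g'', rfl⟩ | rfl
          · exact hcondinl g''
          · constructor
            · intro h; exact absurd (corona_adj_inr_inr.1 h).1 hg'
            · intro h; exact absurd (corona_adj_inr_inr.1 h).1.symm hg'
        · refine mem_support_sandwich hu hv w0 ?_
          erw [hw0, Walk.support_append, List.mem_append]
          right
          erw [Walk.support_append]
          simp [hD]
end

section
/- Let G and H be finite simple connected non-complete graphs and consider the corona product G ∘ H. Let g_i ≠ g_j be vertices of G. Then WT_{G∘H}(g_i,g_j) = WT_G(g_i,g_j) ∪ ⋃_{g ∈ A} ({g} × V(H)), where A = { g ∈ V(G) : g ≠ g_i, g ≠ g_j, g ∈ WT_G(g_i,g_j) } (vertices of G are regarded as vertices of G ∘ H via the inclusion of V(G) into V(G ∘ H)). -/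
open SimpleGraph

section CoronaAux
open SimpleGraph Walk Sum

variable {V W : Type*} {G : SimpleGraph V} {H : SimpleGraph W}

lemma cor_adj_inl_inl {g g' : V} : (corona G H).Adj (inl g) (inl g') ↔ G.Adj g g' := Iff.rfl
lemma cor_adj_inl_inr {g : V} {q : V × W} : (corona G H).Adj (inl g) (inr q) ↔ g = q.1 := Iff.rfl
lemma cor_adj_inr_inl {g : V} {q : V × W} : (corona G H).Adj (inr q) (inl g) ↔ q.1 = g := Iff.rfl
lemma cor_adj_inr_inr {q r : V × W} : (corona G H).Adj (inr q) (inr r) ↔ q.1 = r.1 ∧ H.Adj q.2 r.2 := Iff.rfl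

/-- Projection of corona vertices to `V`. -/
@[reducible] def fC : V ⊕ V × W → V
  | inl g => g
  | inr p => p.1

/-- Inclusion of `G` into the corona. -/
@[reducible] def ιC (G : SimpleGraph V) (H : SimpleGraph W) : G →g corona G H :=
  ⟨inl, fun {a b} h => h⟩

/-- Projection of corona walks to `G`-walks. -/
def projW : ∀ {a b : V ⊕ V × W}, (corona G H).Walk a b → G.Walk (fC a) (fC b)
  | _, _, Walk.nil => Walk.nil
  | inl _, _, Walk.cons (v := inl _) h p => Walk.cons h (projW p)
  | inl _, _, Walk.cons (v := inr _) h p => (projW p).copy (cor_adj_inl_inr.mp h).symm rfl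
  | inr _, _, Walk.cons (v := inl _) h p => (projW p).copy (cor_adj_inr_inl.mp h).symm rfl
  | inr _, _, Walk.cons (v := inr _) h p => (projW p).copy (cor_adj_inr_inr.mp h).1.symm rfl

end CoronaAux
section CoronaAux2
open SimpleGraph Walk Sum

variable {V W : Type*} {G : SimpleGraph V} {H : SimpleGraph W}

lemma mem_support_projW : ∀ {a b : V ⊕ V × W} (p : (corona G H).Walk a b) {x},
    x ∈ p.support → fC x ∈ (projW p).support
  | _, _, Walk.nil, x, hx => by
      simp only [Walk.support_nil, List.mem_singleton] at hx; subst hx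
      simp [projW]
  | inl g, _, Walk.cons (v := inl g') h p, x, hx => by
      simp only [Walk.support_cons, List.mem_cons] at hx
      rcases hx with rfl | hx
      · simp [projW]
      · simp only [projW, Walk.support_cons, List.mem_cons]
        exact List.mem_cons_of_mem _ (mem_support_projW p hx)
  | inl g, _, Walk.cons (v := inr q) h p, x, hx => by
      simp only [Walk.support_cons, List.mem_cons] at hx
      simp only [projW, Walk.support_copy]
      rcases hx with rfl | hx
      · have : fC (inl g : V ⊕ V × W) = fC (inr q : V ⊕ V × W) := cor_adj_inl_inr.mp h
        rw [this]
        exact (projW p).start_mem_support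
      · exact mem_support_projW p hx
  | inr q, _, Walk.cons (v := inl g) h p, x, hx => by
      simp only [Walk.support_cons, List.mem_cons] at hx
      simp only [projW, Walk.support_copy]
      rcases hx with rfl | hx
      · have : fC (inr q : V ⊕ V × W) = fC (inl g : V ⊕ V × W) := cor_adj_inr_inl.mp h
        rw [this]
        exact (projW p).start_mem_support
      · exact mem_support_projW p hx
  | inr q, _, Walk.cons (v := inr r) h p, x, hx => by
      simp only [Walk.support_cons, List.mem_cons] at hx
      simp only [projW, Walk.support_copy]
      rcases hx with rfl | hx
      · have : fC (inr q : V ⊕ V × W) = fC (inr r : V ⊕ V × W) := (cor_adj_inr_inr.mp h).1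
        rw [this]
        exact (projW p).start_mem_support
      · exact mem_support_projW p hx

lemma support_projW_subset : ∀ {a b : V ⊕ V × W} (p : (corona G H).Walk a b) {y},
    y ∈ (projW p).support → ∃ x ∈ p.support, fC x = y
  | _, _, Walk.nil, y, hy => by
      simp only [projW, Walk.support_nil, List.mem_singleton] at hy
      exact ⟨_, by simp, hy.symm⟩
  | inl g, _, Walk.cons (v := inl g') h p, y, hy => by
      simp only [projW, Walk.support_cons, List.mem_cons] at hy
      have hy : y = g ∨ y ∈ (projW p).support := List.mem_cons.mp hy
      rcases hy with rfl | hy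
      · exact ⟨inl y, by simp, rfl⟩
      · obtain ⟨x, hx, hfx⟩ := support_projW_subset p hy
        exact ⟨x, by simp [hx], hfx⟩
  | inl g, _, Walk.cons (v := inr q) h p, y, hy => by
      simp only [projW, Walk.support_copy] at hy
      obtain ⟨x, hx, hfx⟩ := support_projW_subset p hy
      exact ⟨x, by simp [hx], hfx⟩
  | inr q, _, Walk.cons (v := inl g) h p, y, hy => by
      simp only [projW, Walk.support_copy] at hy
      obtain ⟨x, hx, hfx⟩ := support_projW_subset p hy
      exact ⟨x, by simp [hx], hfx⟩
  | inr q, _, Walk.cons (v := inr r) h p, y, hy => by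
      simp only [projW, Walk.support_copy] at hy
      obtain ⟨x, hx, hfx⟩ := support_projW_subset p hy
      exact ⟨x, by simp [hx], hfx⟩

end CoronaAux2
section CoronaAux3
open SimpleGraph Walk Sum

variable {V W : Type*} {G : SimpleGraph V} {H : SimpleGraph W}

lemma getVert_append_of_le {u v w : V} {G' : SimpleGraph V} (p : G'.Walk u v) (q : G'.Walk v w)
    {i : ℕ} (hi : i ≤ p.length) : (p.append q).getVert i = p.getVert i := by
  rw [Walk.getVert_append]
  split_ifs with h
  · rfl
  · have : i = p.length := le_antisymm hi (not_lt.mp h)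
    subst this
    simp

lemma getVert_walk_map {V' U' : Type*} {G' : SimpleGraph V'} {G'' : SimpleGraph U'}
    (φ : G' →g G'') {u v : V'} (w : G'.Walk u v) (i : ℕ) :
    (w.map φ).getVert i = φ (w.getVert i) := by
  induction w generalizing i with
  | nil => rfl
  | cons h p ih =>
    cases i with
    | zero => simp
    | succ n => simp [Walk.getVert_cons_succ, ih]

lemma isWTW_iff {V' : Type*} {G' : SimpleGraph V'} {u v : V'} (w : G'.Walk u v) :
    IsWeaklyTollWalk G' w ↔
      (∀ x ∈ w.support, G'.Adj u x → x = w.getVert 1) ∧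
      (∀ x ∈ w.support, G'.Adj x v → x = w.getVert (w.length - 1)) := by
  constructor
  · rintro ⟨h1, h2⟩
    constructor <;> intro x hx hadj <;>
      obtain ⟨n, rfl, hn⟩ := Walk.mem_support_iff_exists_getVert.mp hx
    exacts [h1 n hn hadj, h2 n hn hadj]
  · rintro ⟨h1, h2⟩
    exact ⟨fun i hi ha => h1 _ (Walk.mem_support_iff_exists_getVert.mpr ⟨i, rfl, hi⟩) ha,
           fun i hi ha => h2 _ (Walk.mem_support_iff_exists_getVert.mpr ⟨i, rfl, hi⟩) ha⟩

/-- the closed copy at `g₀` -/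
def inC (g₀ : V) (a : V ⊕ V × W) : Prop := a = inl g₀ ∨ ∃ h : W, a = inr (g₀, h)

lemma s2_exists_nbr : ∀ {a b : V ⊕ V × W} (w : (corona G H).Walk a b)
    (_ : inC g₀ a) (_ : ¬ inC g₀ b), ∃ x, G.Adj g₀ x ∧ inl x ∈ w.support
  | _, _, Walk.nil, ha, hb => absurd ha hb
  | a, b, Walk.cons (v := c) h p, ha, hb => by
    by_cases hc : inC g₀ c
    · obtain ⟨x, hx, hxs⟩ := s2_exists_nbr p hc hb
      exact ⟨x, hx, by simp [hxs]⟩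
    · rcases ha with rfl | ⟨h0, rfl⟩
      · cases c with
        | inl x =>
          exact ⟨x, cor_adj_inl_inl.mp h, by simp⟩
        | inr q =>
          exact absurd (Or.inr ⟨q.2, congrArg inr (Prod.ext (cor_adj_inl_inr.mp h).symm rfl)⟩) hc
      · cases c with
        | inl x =>
          exact absurd (Or.inl (congrArg inl (cor_adj_inr_inl.mp h).symm)) hc
        | inr q =>
          exact absurd (Or.inr ⟨q.2, congrArg inr (Prod.ext ((cor_adj_inr_inr.mp h).1).symm rfl)⟩) hc

lemma s1_mem_inl {g : V} {a b : V ⊕ V × W} (w : (corona G H).Walk a b)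
    (hb : ¬ inC g b) (h0 : W) (hm : inr (g, h0) ∈ w.support) : inl g ∈ w.support := by
  induction w generalizing h0 with
  | nil =>
    simp only [Walk.support_nil, List.mem_singleton] at hm
    exact absurd (Or.inr ⟨h0, hm.symm⟩) hb
  | @cons a c b h p ih =>
    simp only [Walk.support_cons, List.mem_cons] at hm
    rcases hm with hm | hm
    · subst hm
      cases c with
      | inl x =>
        have : g = x := cor_adj_inr_inl.mp h
        subst this
        simp
      | inr q =>
        have hq : q = (g, q.2) := Prod.ext ((cor_adj_inr_inr.mp h).1).symm rfl
        have := ih hb q.2 (by rw [← hq]; exact p.start_mem_support)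
        simp [this]
    · have := ih hb h0 hm
      simp [this]

end CoronaAux3
section CoronaAux4
open SimpleGraph Walk Sum

variable {V W : Type*} {G : SimpleGraph V} {H : SimpleGraph W}

@[simp] lemma ιC_apply (G : SimpleGraph V) (H : SimpleGraph W) (a : V) : ιC G H a = inl a := rfl

lemma not_inC_inl {g g' : V} (h : g' ≠ g) : ¬ inC g (inl g' : V ⊕ V × W) := by
  rintro (he | ⟨h0, he⟩)
  · exact h (by injection he)
  · exact absurd he (by simp)

/-- Master lemma for the forward inclusion. -/
lemma projW_master {gi gj : V} (hij : gi ≠ gj) (Wk : (corona G H).Walk (inl gi) (inl gj))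
    (hW : IsWeaklyTollWalk (corona G H) Wk) :
    IsWeaklyTollWalk G (projW Wk) ∧
      (∀ h, inr (gi, h) ∉ Wk.support) ∧ (∀ h, inr (gj, h) ∉ Wk.support) := by
  obtain ⟨h1, h2⟩ := (isWTW_iff Wk).mp hW
  obtain ⟨x1, hx1adj, hx1mem⟩ := s2_exists_nbr Wk (Or.inl rfl) (not_inC_inl (Ne.symm hij))
  have hgv1 : Wk.getVert 1 = inl x1 :=
    (h1 _ hx1mem (cor_adj_inl_inl.mpr hx1adj)).symm
  obtain ⟨y1, hy1adj, hy1mem⟩ := s2_exists_nbr Wk.reverse (Or.inl rfl) (not_inC_inl hij)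
  have hy1mem' : inl y1 ∈ Wk.support := by
    rwa [Walk.support_reverse, List.mem_reverse] at hy1mem
  have hgvL : Wk.getVert (Wk.length - 1) = inl y1 :=
    (h2 _ hy1mem' (cor_adj_inl_inl.mpr hy1adj.symm)).symm
  have factA : ∀ h, inr (gi, h) ∉ Wk.support := by
    intro h hmem
    have := h1 _ hmem (cor_adj_inl_inr.mpr rfl)
    rw [hgv1] at this
    exact absurd this (by simp)
  have factB : ∀ h, inr (gj, h) ∉ Wk.support := by
    intro h hmem
    have := h2 _ hmem (cor_adj_inr_inl.mpr rfl)
    rw [hgvL] at this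
    exact absurd this (by simp)
  have uniq_front : ∀ y ∈ (projW Wk).support, G.Adj gi y → y = x1 := by
    intro y hy hadj
    obtain ⟨z, hz, rfl⟩ := support_projW_subset Wk hy
    have hmem : inl (fC z) ∈ Wk.support := by
      cases z with
      | inl u => exact hz
      | inr q =>
        refine s1_mem_inl Wk (not_inC_inl ?_) q.2 hz
        intro he
        refine factB q.2 ?_
        have hq : (gj, q.2) = q := Prod.ext he rfl
        rw [hq]
        exact hz
    have := h1 _ hmem (cor_adj_inl_inl.mpr hadj)
    rw [hgv1] at this
    injection this
  have uniq_back : ∀ y ∈ (projW Wk).support, G.Adj y gj → y = y1 := by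
    intro y hy hadj
    obtain ⟨z, hz, rfl⟩ := support_projW_subset Wk hy
    have hmem : inl (fC z) ∈ Wk.support := by
      cases z with
      | inl u => exact hz
      | inr q => exact s1_mem_inl Wk (not_inC_inl hadj.ne.symm) q.2 hz
    have := h2 _ hmem (cor_adj_inl_inl.mpr hadj)
    rw [hgvL] at this
    injection this
  have plen : 1 ≤ (projW Wk).length := by
    rcases Nat.eq_zero_or_pos (projW Wk).length with h | h
    · exact absurd (Walk.eq_of_length_eq_zero h) hij
    · exact h
  have hp1 : (projW Wk).getVert 1 = x1 := by
    refine uniq_front _ (Walk.mem_support_iff_exists_getVert.mpr ⟨1, rfl, plen⟩) ?_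
    have := (projW Wk).adj_getVert_succ (i := 0) plen
    simpa using this
  have hpL : (projW Wk).getVert ((projW Wk).length - 1) = y1 := by
    refine uniq_back _ (Walk.mem_support_iff_exists_getVert.mpr
      ⟨(projW Wk).length - 1, rfl, Nat.sub_le _ _⟩) ?_
    have hlt : (projW Wk).length - 1 < (projW Wk).length := by omega
    have := (projW Wk).adj_getVert_succ hlt
    rwa [Nat.sub_add_cancel plen, Walk.getVert_length] at this
  refine ⟨(isWTW_iff _).mpr ⟨?_, ?_⟩, factA, factB⟩
  · intro x hx ha
    exact (uniq_front x hx ha).trans hp1.symm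
  · intro x hx ha
    exact (uniq_back x hx ha).trans hpL.symm

/-- Lifting a weakly toll walk of `G` to the corona. -/
lemma lift_wtw {gi gj : V} (w : G.Walk gi gj) (hw : IsWeaklyTollWalk G w) :
    IsWeaklyTollWalk (corona G H) (w.map (ιC G H)) := by
  rw [isWTW_iff] at hw ⊢
  obtain ⟨h1, h2⟩ := hw
  constructor
  · intro x hx hadj
    rw [Walk.support_map, List.mem_map] at hx
    obtain ⟨y, hy, rfl⟩ := hx
    have : G.Adj gi y := hadj
    rw [getVert_walk_map]
    exact congrArg _ (h1 y hy this)
  · intro x hx hadj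
    rw [Walk.support_map, List.mem_map] at hx
    obtain ⟨y, hy, rfl⟩ := hx
    have : G.Adj y gj := hadj
    rw [Walk.length_map, getVert_walk_map]
    exact congrArg _ (h2 y hy this)

end CoronaAux4
section CoronaAux5
open SimpleGraph Walk Sum

variable {V W : Type*} {G : SimpleGraph V} {H : SimpleGraph W}

lemma detour_wtw {gi gj : V} (w : G.Walk gi gj) (hw : IsWeaklyTollWalk G w)
    {g : V} (hgi : g ≠ gi) (hgj : g ≠ gj) (hg : g ∈ w.support) (h0 : W) :
    ∃ Wk : (corona G H).Walk (inl gi) (inl gj),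
      IsWeaklyTollWalk (corona G H) Wk ∧ inr (g, h0) ∈ Wk.support := by
  classical
  obtain ⟨hw1, hw2⟩ := (isWTW_iff w).mp hw
  set t := w.takeUntil g hg with ht
  set d := w.dropUntil g hg with hd
  have hspec : t.append d = w := w.take_spec hg
  have e1 : (corona G H).Adj (inl g) (inr (g, h0)) := cor_adj_inl_inr.mpr rfl
  have e2 : (corona G H).Adj (inr (g, h0)) (inl g) := cor_adj_inr_inl.mpr rfl
  set R : (corona G H).Walk (inl g) (inl gj) :=
    Walk.cons e1 (Walk.cons e2 (d.map (ιC G H))) with hR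
  set Wk : (corona G H).Walk (inl gi) (inl gj) := (t.map (ιC G H)).append R with hWk
  have htl : 1 ≤ t.length := by
    rcases Nat.eq_zero_or_pos t.length with h | h
    · exact absurd (Walk.eq_of_length_eq_zero h) (Ne.symm hgi)
    · exact h
  obtain ⟨k, hk⟩ : ∃ k, d.length = k + 1 := by
    rcases Nat.eq_zero_or_pos d.length with h | h
    · exact absurd (Walk.eq_of_length_eq_zero h) hgj
    · exact ⟨d.length - 1, by omega⟩
  have hwl : w.length = t.length + d.length := by
    rw [← hspec, Walk.length_append]
  have hWkL : Wk.length = t.length + d.length + 2 := by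
    simp only [hWk, hR, Walk.length_append, Walk.length_map, Walk.length_cons]
    omega
  -- second vertex
  have hgv1 : Wk.getVert 1 = inl (w.getVert 1) := by
    rw [hWk, getVert_append_of_le _ _ (by rw [Walk.length_map]; exact htl),
      getVert_walk_map]
    have h1t : t.getVert 1 = w.getVert 1 := by
      rw [← hspec, getVert_append_of_le _ _ htl]
    rw [h1t, ιC_apply]
  -- second-to-last vertex
  have hwend : w.getVert (w.length - 1) = d.getVert k := by
    conv_lhs => rw [← hspec]
    rw [Walk.getVert_append, Walk.length_append]
    rw [if_neg (by omega)]
    congr 1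
    omega
  have hgvL : Wk.getVert (Wk.length - 1) = inl (w.getVert (w.length - 1)) := by
    rw [hWk, Walk.getVert_append, hWkL, if_neg (by rw [Walk.length_map]; omega),
      Walk.length_map]
    have hidx : t.length + d.length + 2 - 1 - t.length = k + 1 + 1 := by omega
    rw [hidx, hR, Walk.getVert_cons_succ, Walk.getVert_cons_succ, getVert_walk_map,
      ιC_apply, hwend]
  have hsup : ∀ x ∈ Wk.support, (∃ y ∈ w.support, x = inl y) ∨ x = inr (g, h0) := by
    intro x hx
    rw [hWk, Walk.mem_support_append_iff] at hx
    rcases hx with hx | hx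
    · rw [Walk.support_map, List.mem_map] at hx
      obtain ⟨y, hy, rfl⟩ := hx
      exact Or.inl ⟨y, Walk.support_takeUntil_subset w hg hy, rfl⟩
    · rw [hR] at hx
      simp only [Walk.support_cons, List.mem_cons] at hx
      rcases hx with rfl | rfl | hx
      · exact Or.inl ⟨g, hg, rfl⟩
      · exact Or.inr rfl
      · rw [Walk.support_map, List.mem_map] at hx
        obtain ⟨y, hy, rfl⟩ := hx
        exact Or.inl ⟨y, Walk.support_dropUntil_subset w hg hy, rfl⟩
  refine ⟨Wk, (isWTW_iff Wk).mpr ⟨?_, ?_⟩, ?_⟩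
  · intro x hx hadj
    rcases hsup x hx with ⟨y, hy, rfl⟩ | rfl
    · have hA : G.Adj gi y := hadj
      rw [hgv1]
      exact congrArg inl (hw1 y hy hA)
    · exact absurd (cor_adj_inl_inr.mp hadj) (Ne.symm hgi)
  · intro x hx hadj
    rcases hsup x hx with ⟨y, hy, rfl⟩ | rfl
    · have hA : G.Adj y gj := hadj
      rw [hgvL]
      exact congrArg inl (hw2 y hy hA)
    · exact absurd (cor_adj_inr_inl.mp hadj) hgj
  · rw [hWk, Walk.mem_support_append_iff]
    right
    rw [hR]
    simp

end CoronaAux5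
/-- In the corona product of finite connected non-complete graphs `G`, `H`,
for distinct `g_i, g_j ∈ V(G)`,
`WT_{G∘H}(g_i,g_j) = WT_G(g_i,g_j) ∪ ⋃_{g ∈ A} V(H^g)`, where
`A = {g ∈ WT_G(g_i,g_j) : g ≠ g_i, g ≠ g_j}`. -/
theorem wtInterval_corona_base {V W : Type*} [Fintype V] [Fintype W]
    (G : SimpleGraph V) (H : SimpleGraph W)
    (hGc : G.Connected) (hHc : H.Connected)
    (hGnc : G ≠ ⊤) (hHnc : H ≠ ⊤)
    (gi gj : V) (hij : gi ≠ gj) :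
    wtInterval (corona G H) (Sum.inl gi) (Sum.inl gj) =
      Sum.inl '' wtInterval G gi gj ∪
        {z : V ⊕ V × W | ∃ g : V, ∃ h : W, z = Sum.inr (g, h) ∧
          g ≠ gi ∧ g ≠ gj ∧ g ∈ wtInterval G gi gj} := by
  classical
  ext x
  constructor
  · rintro ⟨Wk, hW, hx⟩
    obtain ⟨hproj, factA, factB⟩ := projW_master hij Wk hW
    cases x with
    | inl x0 =>
      exact Or.inl ⟨x0, ⟨projW Wk, hproj, mem_support_projW Wk hx⟩, rfl⟩
    | inr q =>
      refine Or.inr ⟨q.1, q.2, by simp, ?_, ?_,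
        ⟨projW Wk, hproj, mem_support_projW Wk hx⟩⟩
      · intro he
        refine factA q.2 ?_
        have hq : ((gi, q.2) : V × W) = q := Prod.ext he.symm rfl
        rw [hq]
        exact hx
      · intro he
        refine factB q.2 ?_
        have hq : ((gj, q.2) : V × W) = q := Prod.ext he.symm rfl
        rw [hq]
        exact hx
  · rintro (⟨x0, ⟨w, hw, hm⟩, rfl⟩ | ⟨g, h0, rfl, hgi, hgj, w, hw, hm⟩)
    · exact ⟨w.map (ιC G H), lift_wtw w hw,
        by rw [SimpleGraph.Walk.support_map]; exact List.mem_map_of_mem hm⟩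
    · obtain ⟨Wk, h1, h2⟩ := detour_wtw w hw hgi hgj hm h0
      exact ⟨Wk, h1, h2⟩
end
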